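/- arXiv:1212.3064 — 4 statements merged into one kernel-verified Lean document; each statement's English description precedes it below -/
import Mathlib

section
/- Let x, y ∈ V(T). If there is a strictly increasing sequence of natural numbers n_1 < n_2 < n_3 < ⋯ such that [B_{n_k}(x)] = [B_{n_k}(y)] for every k, then x and y are in the same class, i.e., there exists a graph automorphism g of T with g(x) = y and φ ∘ g = φ. -/
open SimpleGraph

/-- Equivalence of colored `n`-balls around `x` and `y`: a graph isomorphism between the
induced subgraphs on the balls, sending center to center and preserving the coloring. -/
def BallEquiv {V A : Type*} (T : SimpleGraph V) (φ : V → A) (n : ℕ) (x y : V) : Prop :=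
  ∃ f : {v : V // T.dist x v ≤ n} ≃ {v : V // T.dist y v ≤ n},
    ((f ⟨x, by simp [SimpleGraph.dist_self]⟩ : {v : V // T.dist y v ≤ n}) : V) = y ∧
    (∀ u w : {v : V // T.dist x v ≤ n}, T.Adj (u : V) (w : V) ↔ T.Adj (f u : V) (f w : V)) ∧
    ∀ v : {v : V // T.dist x v ≤ n}, φ (f v : V) = φ (v : V)

/-- Two vertices are in the same class if a color-preserving automorphism of `T`
sends one to the other. -/
def SameClass {V A : Type*} (T : SimpleGraph V) (φ : V → A) (x y : V) : Prop :=
  ∃ g : V ≃ V, (∀ u w : V, T.Adj (g u) (g w) ↔ T.Adj u w) ∧ g x = y ∧ ∀ v, φ (g v) = φ v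

/-- Subword complexity: the number of equivalence classes of colored `n`-balls. -/
noncomputable def ballComplexity {V A : Type*} (T : SimpleGraph V) (φ : V → A) (n : ℕ) : ℕ :=
  Nat.card (Quot (BallEquiv T φ n))

/-- A coloring is periodic if it is invariant under a subgroup of the automorphism group
of `T` having finitely many orbits on vertices. -/
def IsPeriodicColoring {V A : Type*} (T : SimpleGraph V) (φ : V → A) : Prop :=
  ∃ Γ : Subgroup (Equiv.Perm V),
    (∀ γ ∈ Γ, ∀ u w : V, T.Adj (γ u) (γ w) ↔ T.Adj u w) ∧
    (∀ γ ∈ Γ, ∀ v, φ (γ v) = φ v) ∧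
    Finite (Quot (fun x y : V => ∃ γ ∈ Γ, γ x = y))

/-- The colored `n`-ball around `x` is special. -/
def IsSpecial {V A : Type*} (T : SimpleGraph V) (φ : V → A) (n : ℕ) (x : V) : Prop :=
  ∃ y z : V, BallEquiv T φ n x y ∧ BallEquiv T φ n x z ∧ ¬ BallEquiv T φ (n + 1) y z

/-- The type set of a vertex. -/
def TypeSet {V A : Type*} (T : SimpleGraph V) (φ : V → A) (x : V) : Set ℕ :=
  {n : ℕ | IsSpecial T φ n x}

/-- The maximal type of a vertex of bounded type (`-1` if the type set is empty). -/
noncomputable def maxType {V A : Type*} (T : SimpleGraph V) (φ : V → A) (x : V) : ℤ :=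
  sSup (insert (-1) ((fun n : ℕ => (n : ℤ)) '' TypeSet T φ x))

/-- The coloring is Sturmian if its subword complexity is `n + 2`. -/
def IsSturmian {V A : Type*} (T : SimpleGraph V) (φ : V → A) : Prop :=
  ∀ n : ℕ, ballComplexity T φ n = n + 2

/-- Eventually periodic coloring. -/
def IsEventuallyPeriodic {V A : Type*} (T : SimpleGraph V) (φ : V → A) : Prop :=
  ∃ K : Set V, K.Nonempty ∧ K.Finite ∧ (T.induce K).Connected ∧
    ∀ v : (Kᶜ : Set V), ∃ ψ : V → A, IsPeriodicColoring T ψ ∧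
      ∀ w : (Kᶜ : Set V), (T.induce (Kᶜ : Set V)).Reachable v w → ψ (w : V) = φ (w : V)

/-- The vertex set of the `n`-branch from `x` towards its neighbor `x'`. -/
def branchSet {V : Type*} (T : SimpleGraph V) (n : ℕ) (x x' : V) : Set V :=
  insert x {y : V | T.dist x y ≤ n ∧ T.dist y x' < T.dist y x}

/-- Equivalence of colored `n`-branches. -/
def BranchEquiv {V A : Type*} (T : SimpleGraph V) (φ : V → A) (n : ℕ)
    (x x' y y' : V) : Prop :=
  ∃ f : (branchSet T n x x') ≃ (branchSet T n y y'),
    ((f ⟨x, Set.mem_insert x _⟩ : (branchSet T n y y')) : V) = y ∧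
    (∀ u w : (branchSet T n x x'), T.Adj (u : V) (w : V) ↔ T.Adj (f u : V) (f w : V)) ∧
    ∀ v : (branchSet T n x x'), φ (f v : V) = φ (v : V)

/-- A coloring of `K` appears exactly once if the only connected subgraph of `T`
color-isomorphic to it is `K` itself. -/
def AppearsOnce {V A : Type*} (T : SimpleGraph V) (φ : V → A) (K : Set V) : Prop :=
  ∀ K' : Set V, (T.induce K').Connected →
    (∃ f : K ≃ K', (∀ u w : K, T.Adj (u : V) (w : V) ↔ T.Adj (f u : V) (f w : V)) ∧
      ∀ v : K, φ (f v : V) = φ (v : V)) → K' = K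


section Aux
variable {V A : Type*} {T : SimpleGraph V}

lemma my_pred_lemma (hc : T.Connected) (x v : V) (m : ℕ) (hd : T.dist x v = m + 1) :
    ∃ u, T.Adj u v ∧ T.dist x u = m := by
  obtain ⟨p, hp⟩ := (hc x v).exists_walk_length_eq_dist
  have hne : v ≠ x := by
    rintro rfl; rw [SimpleGraph.dist_self] at hd; omega
  obtain ⟨u, ha, q, hq⟩ := p.reverse.exists_eq_cons_of_ne hne
  have hql : q.length = m := by
    have := congrArg SimpleGraph.Walk.length hq
    simp [hp, hd] at this
    omega
  refine ⟨u, ha.symm, le_antisymm ?_ ?_⟩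
  · have := SimpleGraph.dist_le q.reverse
    simpa [hql] using this
  · have h1 : T.dist u v ≤ 1 := by
      simpa using SimpleGraph.dist_le ha.symm.toWalk
    have := hc.dist_triangle (u := x) (v := u) (w := v)
    omega

lemma my_ball_finite (hc : T.Connected) (hfin : ∀ v : V, (T.neighborSet v).Finite) (x : V) :
    ∀ r : ℕ, {v : V | T.dist x v ≤ r}.Finite := by
  intro r
  induction r with
  | zero =>
    refine (Set.finite_singleton x).subset ?_
    intro v hv
    simp only [Set.mem_setOf_eq, Nat.le_zero] at hv
    simp [(hc.dist_eq_zero_iff.mp hv).symm]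
  | succ r ih =>
    refine (ih.union (ih.biUnion fun u _ => hfin u)).subset ?_
    intro v hv
    simp only [Set.mem_setOf_eq] at hv
    rcases le_or_gt (T.dist x v) r with h | h
    · exact Or.inl h
    · have hd : T.dist x v = r + 1 := by omega
      obtain ⟨u, hu, hdu⟩ := my_pred_lemma hc x v r hd
      exact Or.inr (Set.mem_biUnion (le_of_eq hdu) hu)

lemma my_dist_map (hc : T.Connected) {n : ℕ} {x y : V}
    (f : {v : V // T.dist x v ≤ n} → {v : V // T.dist y v ≤ n})
    (hfx : ∀ (h : T.dist x x ≤ n), ((f ⟨x, h⟩ : {v : V // T.dist y v ≤ n}) : V) = y)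
    (hadj : ∀ u w : {v : V // T.dist x v ≤ n}, T.Adj (u : V) (w : V) → T.Adj ((f u : {v : V // T.dist y v ≤ n}) : V) ((f w : {v : V // T.dist y v ≤ n}) : V)) :
    ∀ (m : ℕ) (v : V) (hv : T.dist x v ≤ n), T.dist x v = m →
      T.dist y ((f ⟨v, hv⟩ : {v : V // T.dist y v ≤ n}) : V) ≤ m := by
  intro m
  induction m with
  | zero =>
    intro v hv hd
    have : v = x := (hc.dist_eq_zero_iff.mp hd).symm
    subst this
    simp [hfx hv, SimpleGraph.dist_self]
  | succ m ih =>
    intro v hv hd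
    obtain ⟨u, hu, hdu⟩ := my_pred_lemma hc x v m hd
    have hun : T.dist x u ≤ n := by omega
    have hadj' : T.Adj ((f ⟨u, hun⟩ : {v : V // T.dist y v ≤ n}) : V)
        ((f ⟨v, hv⟩ : {v : V // T.dist y v ≤ n}) : V) := hadj ⟨u, hun⟩ ⟨v, hv⟩ hu
    have h1 : T.dist ((f ⟨u, hun⟩ : {v : V // T.dist y v ≤ n}) : V)
        ((f ⟨v, hv⟩ : {v : V // T.dist y v ≤ n}) : V) ≤ 1 := by
      simpa using SimpleGraph.dist_le hadj'.toWalk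
    have h2 := ih u hun hdu
    have := hc.dist_triangle (u := y)
      (v := ((f ⟨u, hun⟩ : {v : V // T.dist y v ≤ n}) : V))
      (w := ((f ⟨v, hv⟩ : {v : V // T.dist y v ≤ n}) : V))
    omega

end Aux

theorem stmt_0 {V A : Type*} (T : SimpleGraph V) (φ : V → A) (k : ℕ)
    (hk : 2 ≤ k) (htree : T.IsTree) (hreg : ∀ v : V, (T.neighborSet v).ncard = k)
    (x y : V) (nk : ℕ → ℕ) (hmono : StrictMono nk)
    (h : ∀ i : ℕ, BallEquiv T φ (nk i) x y) :
    SameClass T φ x y := by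
  unfold SameClass
  unfold BallEquiv at h
  classical
  have hc : T.Connected := htree.isConnected
  have hfin : ∀ v : V, (T.neighborSet v).Finite := by
    intro v
    by_contra hinf
    have h0 := Set.Infinite.ncard hinf
    rw [hreg v] at h0
    omega
  choose fi hfix hfiadj hfiφ using h
  let U : Ultrafilter ℕ := Ultrafilter.of Filter.cofinite
  have hU : ∀ s : Set ℕ, sᶜ.Finite → s ∈ U :=
    fun s hs => Ultrafilter.of_le Filter.cofinite (Filter.mem_cofinite.mpr hs)
  have hcof : ∀ N : ℕ, {i : ℕ | N ≤ nk i} ∈ U := by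
    intro N
    apply hU
    refine (Set.finite_Iio N).subset ?_
    intro i hi
    simp only [Set.mem_compl_iff, Set.mem_setOf_eq, not_le] at hi
    exact lt_of_le_of_lt hmono.le_apply hi
  let F : ℕ → V → V := fun i v =>
    if hv : T.dist x v ≤ nk i then ((fi i ⟨v, hv⟩ : {v : V // T.dist y v ≤ nk i}) : V) else y
  let G : ℕ → V → V := fun i v =>
    if hv : T.dist y v ≤ nk i then (((fi i).symm ⟨v, hv⟩ : {v : V // T.dist x v ≤ nk i}) : V) else x
  have hFapp : ∀ i v (hv : T.dist x v ≤ nk i),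
      F i v = ((fi i ⟨v, hv⟩ : {v : V // T.dist y v ≤ nk i}) : V) := fun i v hv => dif_pos hv
  have hGapp : ∀ i v (hv : T.dist y v ≤ nk i),
      G i v = (((fi i).symm ⟨v, hv⟩ : {v : V // T.dist x v ≤ nk i}) : V) := fun i v hv => dif_pos hv
  have hsymx : ∀ i (h' : T.dist y y ≤ nk i),
      (((fi i).symm ⟨y, h'⟩ : {v : V // T.dist x v ≤ nk i}) : V) = x := by
    intro i h'
    have he : (⟨y, h'⟩ : {v : V // T.dist y v ≤ nk i}) =
        fi i ⟨x, by simp [SimpleGraph.dist_self]⟩ := Subtype.ext (hfix i).symm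
    rw [he, Equiv.symm_apply_apply]
  have hsymadj : ∀ i (u w : {v : V // T.dist y v ≤ nk i}), T.Adj (u : V) (w : V) →
      T.Adj (((fi i).symm u : {v : V // T.dist x v ≤ nk i}) : V)
        (((fi i).symm w : {v : V // T.dist x v ≤ nk i}) : V) := by
    intro i u w ha
    have := hfiadj i ((fi i).symm u) ((fi i).symm w)
    simp only [Equiv.apply_symm_apply] at this
    exact this.mpr ha
  have hFle : ∀ i v, T.dist y (F i v) ≤ T.dist x v := by
    intro i v
    by_cases hv : T.dist x v ≤ nk i
    · rw [hFapp i v hv]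
      exact my_dist_map hc (fi i) (fun h' => hfix i)
        (fun u w ha => (hfiadj i u w).mp ha) (T.dist x v) v hv rfl
    · have : F i v = y := dif_neg hv
      rw [this, SimpleGraph.dist_self]
      omega
  have hGle : ∀ i v, T.dist x (G i v) ≤ T.dist y v := by
    intro i v
    by_cases hv : T.dist y v ≤ nk i
    · rw [hGapp i v hv]
      exact my_dist_map hc (fi i).symm (hsymx i) (hsymadj i) (T.dist y v) v hv rfl
    · have : G i v = x := dif_neg hv
      rw [this, SimpleGraph.dist_self]
      omega
  have limit : ∀ (H : ℕ → V) (r : ℕ) (c : V), (∀ i, T.dist c (H i) ≤ r) →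
      ∃ w, {i | H i = w} ∈ U := by
    intro H r c hH
    have hS : {v : V | T.dist c v ≤ r}.Finite := my_ball_finite hc hfin c r
    have hmem : {v : V | T.dist c v ≤ r} ∈ Ultrafilter.map H U := by
      rw [Ultrafilter.mem_map]
      exact Filter.univ_mem' (fun i => hH i)
    obtain ⟨w, _, hw⟩ := Ultrafilter.eq_pure_of_finite_mem hS hmem
    refine ⟨w, ?_⟩
    have hmem2 : {w} ∈ Ultrafilter.map H U := by
      rw [hw]; exact Filter.mem_pure.mpr rfl
    rw [Ultrafilter.mem_map] at hmem2
    simpa [Set.preimage, Set.mem_singleton_iff] using hmem2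
  choose g hg using fun v => limit (fun i => F i v) (T.dist x v) y (fun i => hFle i v)
  choose g' hg' using fun v => limit (fun i => G i v) (T.dist y v) x (fun i => hGle i v)
  have hgx : g x = y := by
    obtain ⟨i, hi⟩ := Ultrafilter.nonempty_of_mem (hg x)
    have hvx : T.dist x x ≤ nk i := by simp [SimpleGraph.dist_self]
    rw [← hi]
    show F i x = y
    rw [hFapp i x hvx]
    exact hfix i
  have hgφ : ∀ v, φ (g v) = φ v := by
    intro v
    obtain ⟨i, hi1, hi2⟩ := Ultrafilter.nonempty_of_mem (Filter.inter_mem (hg v) (hcof (T.dist x v)))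
    rw [← hi1]
    show φ (F i v) = φ v
    rw [hFapp i v hi2]
    exact hfiφ i ⟨v, hi2⟩
  have hgadj : ∀ u w : V, T.Adj (g u) (g w) ↔ T.Adj u w := by
    intro u w
    obtain ⟨i, ⟨h1, h2⟩, h3, h4⟩ := Ultrafilter.nonempty_of_mem
      (Filter.inter_mem (Filter.inter_mem (hg u) (hg w))
        (Filter.inter_mem (hcof (T.dist x u)) (hcof (T.dist x w))))
    rw [← h1, ← h2]
    show T.Adj (F i u) (F i w) ↔ T.Adj u w
    rw [hFapp i u h3, hFapp i w h4]
    exact (hfiadj i ⟨u, h3⟩ ⟨w, h4⟩).symm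
  have hlinv : ∀ v, g' (g v) = v := by
    intro v
    obtain ⟨i, ⟨h1, h2⟩, h3⟩ := Ultrafilter.nonempty_of_mem
      (Filter.inter_mem (Filter.inter_mem (hg v) (hg' (g v))) (hcof (T.dist x v)))
    have hdy : T.dist y (g v) ≤ nk i := le_trans (h1 ▸ hFle i v) h3
    have e3 : (⟨g v, hdy⟩ : {w : V // T.dist y w ≤ nk i}) = fi i ⟨v, h3⟩ :=
      Subtype.ext (by show g v = _; rw [← h1]; exact hFapp i v h3)
    rw [← h2]
    show G i (g v) = v
    rw [hGapp i (g v) hdy, e3, Equiv.symm_apply_apply]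
  have hrinv : ∀ v, g (g' v) = v := by
    intro v
    obtain ⟨i, ⟨h1, h2⟩, h3⟩ := Ultrafilter.nonempty_of_mem
      (Filter.inter_mem (Filter.inter_mem (hg' v) (hg (g' v))) (hcof (T.dist y v)))
    have hdx : T.dist x (g' v) ≤ nk i := le_trans (h1 ▸ hGle i v) h3
    have e3 : (⟨g' v, hdx⟩ : {w : V // T.dist x w ≤ nk i}) = (fi i).symm ⟨v, h3⟩ :=
      Subtype.ext (by show g' v = _; rw [← h1]; exact hGapp i v h3)
    rw [← h2]
    show F i (g' v) = v
    rw [hFapp i (g' v) hdx, e3, Equiv.apply_symm_apply]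
  exact ⟨⟨g, g', hlinv, hrinv⟩, hgadj, hgx, hgφ⟩
end

section
/- Let x, y ∈ V(T) and n ∈ ℕ with [B_n(x)] = [B_n(y)] and [B_{n+1}(x)] ≠ [B_{n+1}(y)]. Then for each 1 ≤ m ≤ n there exist vertices x' with d(x, x') = m and y' with d(y, y') = m such that [B_{n−m+1}(x')] ≠ [B_{n−m+1}(y')] and [B_{n−m}(x')] = [B_{n−m}(y')]. Consequently, if the colored n-ball [B_n(x)] is special, then for every l < n there is a vertex x' with d(x, x') = n − l such that [B_l(x')] is special. -/
open SimpleGraph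

/-!
In a tree, the colored `(r + 1)`-ball around `c` is glued from the color of `c` and the
depth-`r` branches at the neighbours of `c`; likewise the branch at `d` seen from `u` is glued
from the branches at the neighbours of `d` other than `u`. Let `f` match the `n`-balls around `x`
and `y`, and let `u` be at distance `m < n` from `x` with non-matching `(n - m + 1)`-balls around
`u` and `f u`. The branch of `u` towards `x` is matched by `f` itself, so the branch at some child
`u'` of `u` is not matched. But `f` matches the branch at `u` seen from `u'` with the one at `f u`
seen from `f u'`. So if the `(n - m)`-balls around `u'` and `f u'` were isomorphic, the branches
at the other neighbours of `u'` and `f u'` could be matched as well (after a transposition), and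
with them the branches at `u'` and `f u'` seen from `u` and `f u`. Walking outwards from `x` gives
the first claim; pulling the vertex found back through the isomorphism of a special ball gives
the second.
-/

theorem Set.BijOn.exists_bijOn_sdiff_singleton {α β : Type*} {s : Set α} {t : Set β}
    {σ : α → β} (hσ : Set.BijOn σ s t) {R : α → β → Prop} (hR : ∀ a ∈ s, R a (σ a)) {a : α}
    {b : β} (ha : a ∈ s) (hb : b ∈ t) (hab : R a b)
    (hdif : ∀ a₁ ∈ s, ∀ a₂ ∈ s, ∀ b₁ ∈ t, ∀ b₂ ∈ t, R a₁ b₁ → R a₂ b₁ → R a₂ b₂ → R a₁ b₂) :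
    ∃ τ : α → β, Set.BijOn τ (s \ {a}) (t \ {b}) ∧ ∀ a' ∈ s \ {a}, R a' (τ a') := by
  classical
  have hτ := (Equiv.bijOn_swap (hσ.mapsTo ha) hb).comp hσ
  have hτa : (Equiv.swap (σ a) b ∘ σ) a = b := Equiv.swap_apply_left _ _
  refine ⟨_, hτa ▸ hτ.sdiff_singleton ha, fun a' ⟨ha', hne⟩ => ?_⟩
  have hσne : σ a' ≠ σ a := hσ.injOn.ne ha' ha hne
  by_cases hb' : σ a' = b
  · rw [Function.comp_apply, hb', Equiv.swap_apply_right]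
    exact hdif a' ha' a ha b hb (σ a) (hσ.mapsTo ha) (hb' ▸ hR a' ha') hab (hR a ha)
  · rw [Function.comp_apply, Equiv.swap_apply_of_ne_of_ne hσne hb']
    exact hR a' ha'

namespace SimpleGraph

variable {V : Type*} {T : SimpleGraph V}

section Metric

variable {u v w x a : V}

lemma Walk.dist_add_dist_le_length (p : T.Walk u v) (hw : w ∈ p.support) :
    T.dist u w + T.dist w v ≤ p.length := by
  classical
  have hlen := congrArg Walk.length (p.take_spec hw)
  rw [Walk.length_append] at hlen
  have := T.dist_le (p.takeUntil w hw)
  have := T.dist_le (p.dropUntil w hw)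
  omega

lemma Connected.exists_adj_dist_add_one_eq (hT : T.Connected) (h : v ≠ u) :
    ∃ d, T.Adj u d ∧ T.dist d v + 1 = T.dist u v := by
  obtain ⟨p, -, hp⟩ := hT.exists_path_of_dist u v
  cases p with
  | nil => exact absurd rfl h
  | cons had q =>
    refine ⟨_, had, le_antisymm ?_ ?_⟩
    · have := T.dist_le q
      rw [Walk.length_cons] at hp
      omega
    · have := had.reachable.dist_triangle_left v
      rwa [dist_eq_one_iff_adj.mpr had, add_comm] at this

lemma IsAcyclic.length_eq_dist_of_isPath (hT : T.IsAcyclic) {p : T.Walk u v} (hp : p.IsPath) :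
    p.length = T.dist u v := by
  obtain ⟨q, hq, hlen⟩ := p.reachable.exists_path_of_dist
  obtain rfl : p = q := congrArg Subtype.val ((hT.subsingleton_path u v).elim ⟨p, hp⟩ ⟨q, hq⟩)
  exact hlen

lemma IsAcyclic.eq_penultimate_or_dist_eq_add_one (hT : T.IsAcyclic) {p : T.Walk x w}
    (hp : p.IsPath) (h : T.Adj w a) : a = p.penultimate ∨ T.dist x a = T.dist x w + 1 := by
  by_cases ha : a ∈ p.support
  · exact Or.inl (hT.eq_penultimate_of_adj_end hp h ha)
  · right
    rw [← hT.length_eq_dist_of_isPath (hp.concat ha h), Walk.length_concat,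
      hT.length_eq_dist_of_isPath hp]

lemma IsTree.dist_adj (hT : T.IsTree) (h : T.Adj u a) :
    T.dist x a = T.dist x u + 1 ∨ T.dist x u = T.dist x a + 1 := by
  obtain ⟨p, hp, hlen⟩ := hT.connected.exists_path_of_dist x u
  refine (hT.isAcyclic.eq_penultimate_or_dist_eq_add_one hp h).symm.imp_right fun ha => ?_
  have h₁ := p.dist_add_dist_le_length (ha ▸ p.getVert_mem_support _ : a ∈ p.support)
  have h₂ := hT.connected.dist_triangle (u := x) (v := a) (w := u)
  rw [dist_eq_one_iff_adj.mpr h.symm] at h₁ h₂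
  omega

lemma IsTree.eq_of_adj_of_dist_add_one (hT : T.IsTree) {u₁ u₂ : V} (h₁ : T.Adj w u₁)
    (h₂ : T.Adj w u₂) (hd₁ : T.dist x u₁ + 1 = T.dist x w)
    (hd₂ : T.dist x u₂ + 1 = T.dist x w) : u₁ = u₂ := by
  obtain ⟨p, hp, -⟩ := hT.connected.exists_path_of_dist x w
  rw [(hT.isAcyclic.eq_penultimate_or_dist_eq_add_one hp h₁).resolve_right (by omega),
    (hT.isAcyclic.eq_penultimate_or_dist_eq_add_one hp h₂).resolve_right (by omega)]

lemma IsTree.exists_walk_dist_le_max (hT : T.IsTree) (x u v : V) :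
    ∃ p : T.Walk u v, p.length = T.dist u v ∧
      ∀ w ∈ p.support, T.dist x w ≤ max (T.dist x u) (T.dist x v) := by
  classical
  obtain ⟨q₁, -, h₁⟩ := hT.connected.exists_path_of_dist x u
  obtain ⟨q₂, -, h₂⟩ := hT.connected.exists_path_of_dist x v
  refine ⟨(q₁.reverse.append q₂).bypass,
    hT.isAcyclic.length_eq_dist_of_isPath (Walk.bypass_isPath _), fun w hw => ?_⟩
  replace hw := Walk.support_bypass_subset_support _ hw
  rw [Walk.support_append, Walk.support_reverse, List.mem_append, List.mem_reverse] at hw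
  rcases hw with hw | hw
  · have := q₁.dist_add_dist_le_length hw
    exact le_max_of_le_left (by omega)
  · have := q₂.dist_add_dist_le_length (List.mem_of_mem_tail hw)
    exact le_max_of_le_right (by omega)

end Metric

section Cone

variable {c d u v : V} {r : ℕ}

def closedBall (T : SimpleGraph V) (x : V) (n : ℕ) : Set V := {v | T.dist x v ≤ n}

/-- For adjacent `c` and `d`: the vertices within distance `r` of `d` that lie behind `d` as
seen from `c`, i.e. the depth-`r` branch of the tree at `d` pointing away from `c`. -/
def cone (T : SimpleGraph V) (r : ℕ) (c d : V) : Set V :=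
  {v | T.dist d v ≤ r ∧ T.dist c v = T.dist d v + 1}

@[simp] lemma mem_closedBall {x : V} {n : ℕ} : v ∈ T.closedBall x n ↔ T.dist x v ≤ n := Iff.rfl

lemma mem_cone : v ∈ T.cone r c d ↔ T.dist d v ≤ r ∧ T.dist c v = T.dist d v + 1 := Iff.rfl

lemma Connected.closedBall_subset_closedBall (hT : T.Connected) {x : V} {n : ℕ}
    (h : T.dist x u + r ≤ n) : T.closedBall u r ⊆ T.closedBall x n := fun v hv => by
  have := hT.dist_triangle (u := x) (v := u) (w := v)
  simp only [mem_closedBall] at hv ⊢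
  omega

lemma cone_subset_closedBall : T.cone r c d ⊆ T.closedBall d r := fun _ hv => hv.1

lemma neighborSet_subset_closedBall : T.neighborSet c ⊆ T.closedBall c 1 :=
  fun _ hv => (dist_eq_one_iff_adj.mpr hv).le

lemma mem_cone_self (h : T.Adj c d) : d ∈ T.cone r c d := by
  simp [mem_cone, dist_eq_one_iff_adj.mpr h]

lemma ne_of_mem_cone (hv : v ∈ T.cone r c d) : v ≠ c := by
  rintro rfl
  simp [mem_cone] at hv

lemma IsTree.eq_of_mem_cone (hT : T.IsTree) {d₁ d₂ : V} {r₁ r₂ : ℕ} (h₁ : T.Adj c d₁)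
    (h₂ : T.Adj c d₂) (hv₁ : v ∈ T.cone r₁ c d₁) (hv₂ : v ∈ T.cone r₂ c d₂) : d₁ = d₂ :=
  hT.eq_of_adj_of_dist_add_one (x := v) h₁ h₂
    (by rw [dist_comm (u := v), dist_comm (u := v), hv₁.2])
    (by rw [dist_comm (u := v), dist_comm (u := v), hv₂.2])

lemma Connected.adj_iff_eq_of_mem_cone (hT : T.Connected) (h : T.Adj c d)
    (hv : v ∈ T.cone r c d) : T.Adj c v ↔ v = d := by
  refine ⟨fun hcv => ?_, fun hvd => hvd ▸ h⟩
  have := hv.2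
  rw [dist_eq_one_iff_adj.mpr hcv] at this
  exact (hT.dist_eq_zero_iff.mp (by omega)).symm

lemma IsTree.not_adj_of_mem_cone_of_ne (hT : T.IsTree) {d₁ d₂ v₁ v₂ : V} {r₁ r₂ : ℕ}
    (h₁ : T.Adj c d₁) (h₂ : T.Adj c d₂) (hne : d₁ ≠ d₂) (hv₁ : v₁ ∈ T.cone r₁ c d₁)
    (hv₂ : v₂ ∈ T.cone r₂ c d₂) : ¬ T.Adj v₁ v₂ := by
  intro h
  wlog hfar : T.dist c v₂ = T.dist c v₁ + 1 generalizing d₁ d₂ v₁ v₂ r₁ r₂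
  · exact this h₂ h₁ hne.symm hv₂ hv₁ h.symm
      ((hT.dist_adj h).resolve_left hfar)
  -- both `d₁` and `d₂` are then one step closer to `v₂` than `c` is
  have hd₁ : T.dist d₁ v₂ ≤ T.dist d₁ v₁ + 1 := by
    simpa [dist_eq_one_iff_adj.mpr h] using hT.connected.dist_triangle (u := d₁) (v := v₁) (w := v₂)
  have hc : T.dist c v₂ ≤ T.dist d₁ v₂ + 1 := by
    simpa [dist_eq_one_iff_adj.mpr h₁, add_comm] using
      hT.connected.dist_triangle (u := c) (v := d₁) (w := v₂)
  refine hne (hT.eq_of_mem_cone h₁ h₂ (r₁ := T.dist d₁ v₂) ⟨le_rfl, ?_⟩ hv₂)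
  have := hv₁.2
  omega

lemma Connected.closedBall_succ_eq (hT : T.Connected) :
    T.closedBall c (r + 1) = insert c (⋃ d ∈ T.neighborSet c, T.cone r c d) := by
  ext v
  simp only [mem_closedBall, Set.mem_insert_iff, Set.mem_iUnion, mem_neighborSet, mem_cone,
    exists_prop]
  refine ⟨fun hv => or_iff_not_imp_left.mpr fun hvc => ?_, ?_⟩
  · obtain ⟨d, hcd, hd⟩ := hT.exists_adj_dist_add_one_eq hvc
    exact ⟨d, hcd, by omega, hd.symm⟩
  · rintro (rfl | ⟨d, -, hd, hcv⟩)
    · simp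
    · omega

lemma IsTree.cone_succ_eq (hT : T.IsTree) (huc : T.Adj u c) :
    T.cone (r + 1) u c = insert c (⋃ d ∈ T.neighborSet c \ {u}, T.cone r c d) := by
  ext v
  simp only [Set.mem_insert_iff, Set.mem_iUnion, Set.mem_sdiff, mem_neighborSet,
    Set.mem_singleton_iff, exists_prop]
  constructor
  · rintro ⟨hv, huv⟩
    refine or_iff_not_imp_left.mpr fun hvc => ?_
    obtain ⟨d, hcd, hd⟩ := hT.connected.exists_adj_dist_add_one_eq hvc
    refine ⟨d, ⟨hcd, ?_⟩, by omega, hd.symm⟩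
    rintro rfl
    omega
  · rintro (rfl | ⟨d, ⟨hcd, hdu⟩, hv, hcv⟩)
    · exact mem_cone_self huc
    refine ⟨by omega, ?_⟩
    rcases hT.dist_adj (x := v) huc with hcv' | huv
    · exact absurd (hT.eq_of_adj_of_dist_add_one (x := v) huc.symm hcd hcv'.symm
        (by rw [dist_comm (u := v), dist_comm (u := v), hcv])) (Ne.symm hdu)
    · rw [dist_comm (u := u), huv, dist_comm (u := v)]

end Cone

section ColorIso

variable {A : Type*} {φ : V → A} {f g : V → V} {s t p : Set V} {a b c : V}

structure IsColorIsoOn (T : SimpleGraph V) (φ : V → A) (f : V → V) (s t : Set V) : Prop where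
  bijOn : Set.BijOn f s t
  adj_iff : ∀ ⦃u⦄, u ∈ s → ∀ ⦃w⦄, w ∈ s → (T.Adj (f u) (f w) ↔ T.Adj u w)
  color_eq : ∀ ⦃v⦄, v ∈ s → φ (f v) = φ v

def ColorIsoOn (T : SimpleGraph V) (φ : V → A) (s t : Set V) (a b : V) : Prop :=
  ∃ f, IsColorIsoOn T φ f s t ∧ f a = b

lemma IsColorIsoOn.comp (hg : IsColorIsoOn T φ g t p) (hf : IsColorIsoOn T φ f s t) :
    IsColorIsoOn T φ (g ∘ f) s p where
  bijOn := hg.bijOn.comp hf.bijOn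
  adj_iff _ hu _ hw :=
    (hg.adj_iff (hf.bijOn.mapsTo hu) (hf.bijOn.mapsTo hw)).trans (hf.adj_iff hu hw)
  color_eq _ hv := (hg.color_eq (hf.bijOn.mapsTo hv)).trans (hf.color_eq hv)

lemma IsColorIsoOn.invFunOn [Nonempty V] (hf : IsColorIsoOn T φ f s t) :
    IsColorIsoOn T φ (Function.invFunOn f s) t s := by
  have hinv := hf.bijOn.invOn_invFunOn
  have hg := hf.bijOn.symm hinv.symm
  refine ⟨hg, fun u hu w hw => ?_, fun v hv => ?_⟩
  · rw [← hf.adj_iff (hg.mapsTo hu) (hg.mapsTo hw), hinv.2 hu, hinv.2 hw]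
  · rw [← hf.color_eq (hg.mapsTo hv), hinv.2 hv]

lemma IsColorIsoOn.mono (hf : IsColorIsoOn T φ f s t) {s' t' : Set V} (hs : s' ⊆ s)
    (ht : t' ⊆ t) (h : ∀ v ∈ s, v ∈ s' ↔ f v ∈ t') : IsColorIsoOn T φ f s' t' where
  bijOn := by
    refine ⟨fun v hv => (h v (hs hv)).1 hv, hf.bijOn.injOn.mono hs, fun w hw => ?_⟩
    obtain ⟨v, hv, rfl⟩ := hf.bijOn.surjOn (ht hw)
    exact ⟨v, (h v hv).2 hw, rfl⟩
  adj_iff _ hu _ hw := hf.adj_iff (hs hu) (hs hw)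
  color_eq _ hv := hf.color_eq (hs hv)

lemma ColorIsoOn.symm (h : ColorIsoOn T φ s t a b) (ha : a ∈ s) : ColorIsoOn T φ t s b a := by
  obtain ⟨f, hf, rfl⟩ := h
  have : Nonempty V := ⟨a⟩
  exact ⟨_, hf.invFunOn, hf.bijOn.invOn_invFunOn.1 ha⟩

lemma ColorIsoOn.trans (h₁ : ColorIsoOn T φ s t a b) (h₂ : ColorIsoOn T φ t p b c) :
    ColorIsoOn T φ s p a c := by
  obtain ⟨f, hf, rfl⟩ := h₁
  obtain ⟨g, hg, rfl⟩ := h₂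
  exact ⟨g ∘ f, hg.comp hf, rfl⟩

lemma IsColorIsoOn.dist_le_length (hf : IsColorIsoOn T φ f s t) {u v : V} (p : T.Walk u v)
    (hp : ∀ w ∈ p.support, w ∈ s) : T.dist (f u) (f v) ≤ p.length := by
  induction p with
  | nil => simp
  | @cons u w v h q ih =>
    have hadj : T.Adj (f u) (f w) := (hf.adj_iff (hp u (by simp)) (hp w (by simp))).2 h
    have htri := hadj.reachable.dist_triangle_left (f v)
    have := ih fun x hx => hp x (by simp [hx])
    rw [dist_eq_one_iff_adj.mpr hadj] at htri
    rw [Walk.length_cons]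
    omega

variable {x y u v : V} {n r : ℕ}

lemma IsColorIsoOn.dist_le (hT : T.IsTree) (hf : IsColorIsoOn T φ f (T.closedBall x n) t)
    (hu : u ∈ T.closedBall x n) (hv : v ∈ T.closedBall x n) : T.dist (f u) (f v) ≤ T.dist u v := by
  obtain ⟨p, hp, hsupp⟩ := hT.exists_walk_dist_le_max x u v
  exact hp ▸ hf.dist_le_length p fun w hw => (hsupp w hw).trans (max_le hu hv)

lemma IsColorIsoOn.dist_eq (hT : T.IsTree)
    (hf : IsColorIsoOn T φ f (T.closedBall x n) (T.closedBall y n))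
    (hu : u ∈ T.closedBall x n) (hv : v ∈ T.closedBall x n) : T.dist (f u) (f v) = T.dist u v := by
  have : Nonempty V := ⟨u⟩
  refine (hf.dist_le hT hu hv).antisymm ?_
  have hinv := hf.bijOn.invOn_invFunOn
  have := hf.invFunOn.dist_le hT (hf.bijOn.mapsTo hu) (hf.bijOn.mapsTo hv)
  rwa [hinv.1 hu, hinv.1 hv] at this

lemma IsColorIsoOn.dist_apply_eq (hT : T.IsTree)
    (hf : IsColorIsoOn T φ f (T.closedBall x n) (T.closedBall y n)) (hfx : f x = y)
    (hu : u ∈ T.closedBall x n) : T.dist y (f u) = T.dist x u :=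
  hfx ▸ hf.dist_eq hT (by simp) hu

lemma IsColorIsoOn.restrict_closedBall (hT : T.IsTree)
    (hf : IsColorIsoOn T φ f (T.closedBall x n) (T.closedBall y n)) (hfx : f x = y)
    (hu : T.dist x u + r ≤ n) :
    IsColorIsoOn T φ f (T.closedBall u r) (T.closedBall (f u) r) := by
  have hu' : u ∈ T.closedBall x n := by simp only [mem_closedBall]; omega
  refine hf.mono (hT.connected.closedBall_subset_closedBall hu)
    (hT.connected.closedBall_subset_closedBall (hf.dist_apply_eq hT hfx hu' ▸ hu)) fun v hv => ?_
  simp only [mem_closedBall, hf.dist_eq hT hu' hv]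

lemma IsColorIsoOn.restrict_cone (hT : T.IsTree)
    (hf : IsColorIsoOn T φ f (T.closedBall x n) (T.closedBall y n)) (hfx : f x = y) {c d : V}
    (hc : T.dist x c ≤ n) (hd : T.dist x d + r ≤ n) :
    IsColorIsoOn T φ f (T.cone r c d) (T.cone r (f c) (f d)) := by
  have hd' : d ∈ T.closedBall x n := by simp only [mem_closedBall]; omega
  refine hf.mono (cone_subset_closedBall.trans (hT.connected.closedBall_subset_closedBall hd))
    (cone_subset_closedBall.trans
      (hT.connected.closedBall_subset_closedBall (hf.dist_apply_eq hT hfx hd' ▸ hd)))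
    fun v hv => ?_
  simp only [mem_cone, hf.dist_eq hT hd' hv, hf.dist_eq hT hc hv]

lemma IsColorIsoOn.bijOn_neighborSet (hT : T.IsTree)
    (hf : IsColorIsoOn T φ f (T.closedBall x n) (T.closedBall y n)) (hfx : f x = y) {c : V}
    (hc : T.dist x c + 1 ≤ n) : Set.BijOn f (T.neighborSet c) (T.neighborSet (f c)) := by
  have hc' : c ∈ T.closedBall x n := by simp only [mem_closedBall]; omega
  refine (hf.mono
    (neighborSet_subset_closedBall.trans (hT.connected.closedBall_subset_closedBall hc))
    (neighborSet_subset_closedBall.trans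
      (hT.connected.closedBall_subset_closedBall (hf.dist_apply_eq hT hfx hc' ▸ hc)))
    fun v hv => (hf.adj_iff hc' hv).symm).bijOn

lemma ballEquiv_iff_colorIsoOn :
    BallEquiv T φ n x y ↔ ColorIsoOn T φ (T.closedBall x n) (T.closedBall y n) x y := by
  classical
  constructor
  · rintro ⟨e, hex, hadj, hcol⟩
    let f : V → V := fun v => if h : T.dist x v ≤ n then e ⟨v, h⟩ else v
    have hf : ∀ v (h : T.dist x v ≤ n), f v = e ⟨v, h⟩ := fun v h => dif_pos h
    refine ⟨f, ⟨⟨fun v hv => hf v hv ▸ (e _).2, fun v hv w hw hvw => ?_, fun w hw => ?_⟩,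
      fun u hu w hw => ?_, fun v hv => ?_⟩, hf x _ ▸ hex⟩
    · rw [hf v hv, hf w hw] at hvw
      exact congrArg Subtype.val (e.injective (Subtype.ext hvw))
    · exact ⟨e.symm ⟨w, hw⟩, (e.symm _).2, by rw [hf _ (e.symm _).2]; simp⟩
    · rw [hf u hu, hf w hw]
      exact (hadj ⟨u, hu⟩ ⟨w, hw⟩).symm
    · rw [hf v hv]
      exact hcol ⟨v, hv⟩
  · rintro ⟨f, hf, hfx⟩
    exact ⟨hf.bijOn.equiv f, hfx, fun u w => (hf.adj_iff u.2 w.2).symm, fun v => hf.color_eq v.2⟩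

end ColorIso

section Glue

variable {A : Type*} {φ : V → A} {c c' : V} {r : ℕ} {D D' : Set V} {τ : V → V} {F : V → V → V}

open Classical in
noncomputable def starGlue (T : SimpleGraph V) (r : ℕ) (c c' : V) (D : Set V) (F : V → V → V)
    (v : V) : V :=
  if h : ∃ d ∈ D, v ∈ T.cone r c d then F h.choose v else c'

lemma starGlue_self : starGlue T r c c' D F c = c' :=
  dif_neg fun ⟨_, _, h⟩ => ne_of_mem_cone h rfl

lemma IsTree.starGlue_eq (hT : T.IsTree) (hD : D ⊆ T.neighborSet c) {d v : V} (hd : d ∈ D)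
    (hv : v ∈ T.cone r c d) : starGlue T r c c' D F v = F d v := by
  have h : ∃ d ∈ D, v ∈ T.cone r c d := ⟨d, hd, hv⟩
  rw [starGlue, dif_pos h, hT.eq_of_mem_cone (hD h.choose_spec.1) (hD hd) h.choose_spec.2 hv]

lemma IsTree.starGlue_mem_cone (hT : T.IsTree) (hD : D ⊆ T.neighborSet c)
    (hF : ∀ d ∈ D, Set.MapsTo (F d) (T.cone r c d) (T.cone r c' (τ d))) {d v : V} (hd : d ∈ D)
    (hv : v ∈ T.cone r c d) : starGlue T r c c' D F v ∈ T.cone r c' (τ d) :=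
  (hT.starGlue_eq hD hd hv).symm ▸ hF d hd hv

lemma mem_insert_biUnion_cone {v : V} :
    v ∈ insert c (⋃ d ∈ D, T.cone r c d) ↔ v = c ∨ ∃ d ∈ D, v ∈ T.cone r c d := by
  simp

lemma IsTree.bijOn_starGlue (hT : T.IsTree) (hD : D ⊆ T.neighborSet c)
    (hD' : D' ⊆ T.neighborSet c') (hτ : Set.BijOn τ D D')
    (hF : ∀ d ∈ D, Set.BijOn (F d) (T.cone r c d) (T.cone r c' (τ d))) :
    Set.BijOn (starGlue T r c c' D F) (insert c (⋃ d ∈ D, T.cone r c d))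
      (insert c' (⋃ d ∈ D', T.cone r c' d)) := by
  have hmaps {d v} (hd : d ∈ D) (hv : v ∈ T.cone r c d) :
      starGlue T r c c' D F v ∈ T.cone r c' (τ d) :=
    hT.starGlue_mem_cone hD (fun d hd => (hF d hd).mapsTo) hd hv
  refine ⟨fun v hv => ?_, fun v₁ hv₁ v₂ hv₂ heq => ?_, fun w hw => ?_⟩
  · rcases mem_insert_biUnion_cone.mp hv with rfl | ⟨d, hd, hv⟩
    · exact starGlue_self ▸ Set.mem_insert _ _
    · exact mem_insert_biUnion_cone.mpr (.inr ⟨τ d, hτ.mapsTo hd, hmaps hd hv⟩)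
  · rcases mem_insert_biUnion_cone.mp hv₁ with rfl | ⟨d₁, hd₁, hv₁⟩ <;>
      rcases mem_insert_biUnion_cone.mp hv₂ with rfl | ⟨d₂, hd₂, hv₂⟩
    · rfl
    · have := hmaps hd₂ hv₂
      rw [← heq, starGlue_self] at this
      exact absurd rfl (ne_of_mem_cone this)
    · have := hmaps hd₁ hv₁
      rw [heq, starGlue_self] at this
      exact absurd rfl (ne_of_mem_cone this)
    · obtain rfl : d₁ = d₂ := hτ.injOn hd₁ hd₂ (hT.eq_of_mem_cone (hD' (hτ.mapsTo hd₁))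
        (hD' (hτ.mapsTo hd₂)) (heq ▸ hmaps hd₁ hv₁) (hmaps hd₂ hv₂))
      rw [hT.starGlue_eq hD hd₁ hv₁, hT.starGlue_eq hD hd₂ hv₂] at heq
      exact (hF d₁ hd₁).injOn hv₁ hv₂ heq
  · rcases mem_insert_biUnion_cone.mp hw with rfl | ⟨d', hd', hw⟩
    · exact ⟨c, Set.mem_insert _ _, starGlue_self⟩
    obtain ⟨d, hd, rfl⟩ := hτ.surjOn hd'
    obtain ⟨v, hv, rfl⟩ := (hF d hd).surjOn hw
    exact ⟨v, mem_insert_biUnion_cone.mpr (.inr ⟨d, hd, hv⟩), hT.starGlue_eq hD hd hv⟩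

theorem IsTree.isColorIsoOn_starGlue (hT : T.IsTree) (hD : D ⊆ T.neighborSet c)
    (hD' : D' ⊆ T.neighborSet c') (hτ : Set.BijOn τ D D') (hcol : φ c' = φ c)
    (hF : ∀ d ∈ D, IsColorIsoOn T φ (F d) (T.cone r c d) (T.cone r c' (τ d)))
    (hFd : ∀ d ∈ D, F d d = τ d) :
    IsColorIsoOn T φ (starGlue T r c c' D F) (insert c (⋃ d ∈ D, T.cone r c d))
      (insert c' (⋃ d ∈ D', T.cone r c' d)) := by
  have hg {d v} (hd : d ∈ D) (hv : v ∈ T.cone r c d) : starGlue T r c c' D F v = F d v :=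
    hT.starGlue_eq hD hd hv
  have hmaps {d v} (hd : d ∈ D) (hv : v ∈ T.cone r c d) :
      starGlue T r c c' D F v ∈ T.cone r c' (τ d) :=
    hT.starGlue_mem_cone hD (fun d hd => (hF d hd).bijOn.mapsTo) hd hv
  -- the root is adjacent exactly to the roots of the branches, on both sides
  have hroot {d w} (hd : d ∈ D) (hw : w ∈ T.cone r c d) :
      T.Adj (starGlue T r c c' D F c) (starGlue T r c c' D F w) ↔ T.Adj c w := by
    rw [starGlue_self, hg hd hw,
      hT.connected.adj_iff_eq_of_mem_cone (hD' (hτ.mapsTo hd)) ((hF d hd).bijOn.mapsTo hw),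
      hT.connected.adj_iff_eq_of_mem_cone (hD hd) hw, ← hFd d hd,
      (hF d hd).bijOn.injOn.eq_iff hw (mem_cone_self (hD hd))]
  refine ⟨hT.bijOn_starGlue hD hD' hτ fun d hd => (hF d hd).bijOn, fun v₁ hv₁ v₂ hv₂ => ?_,
    fun v hv => ?_⟩
  · rcases mem_insert_biUnion_cone.mp hv₁ with rfl | ⟨d₁, hd₁, hv₁⟩ <;>
      rcases mem_insert_biUnion_cone.mp hv₂ with rfl | ⟨d₂, hd₂, hv₂⟩
    · simp
    · exact hroot hd₂ hv₂
    · rw [T.adj_comm, T.adj_comm v₁]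
      exact hroot hd₁ hv₁
    · by_cases hd : d₁ = d₂
      · subst hd
        rw [hg hd₁ hv₁, hg hd₂ hv₂]
        exact (hF d₁ hd₁).adj_iff hv₁ hv₂
      · refine iff_of_false ?_ (hT.not_adj_of_mem_cone_of_ne (hD hd₁) (hD hd₂) hd hv₁ hv₂)
        exact hT.not_adj_of_mem_cone_of_ne (hD' (hτ.mapsTo hd₁)) (hD' (hτ.mapsTo hd₂))
          (hτ.injOn.ne hd₁ hd₂ hd) (hmaps hd₁ hv₁) (hmaps hd₂ hv₂)
  · rcases mem_insert_biUnion_cone.mp hv with rfl | ⟨d, hd, hv⟩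
    · rw [starGlue_self, hcol]
    · rw [hg hd hv]
      exact (hF d hd).color_eq hv

theorem IsTree.colorIsoOn_star (hT : T.IsTree) (hD : D ⊆ T.neighborSet c)
    (hD' : D' ⊆ T.neighborSet c') (hτ : Set.BijOn τ D D') (hcol : φ c' = φ c)
    (hF : ∀ d ∈ D, ColorIsoOn T φ (T.cone r c d) (T.cone r c' (τ d)) d (τ d)) :
    ColorIsoOn T φ (insert c (⋃ d ∈ D, T.cone r c d))
      (insert c' (⋃ d ∈ D', T.cone r c' d)) c c' := by
  choose! F hF hFd using hF
  exact ⟨_, hT.isColorIsoOn_starGlue hD hD' hτ hcol hF hFd, starGlue_self⟩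

end Glue

section Branching

variable {A : Type*} {φ : V → A} {f : V → V} {x y u u' d d' : V} {n r : ℕ}

theorem IsTree.colorIsoOn_cone_succ (hT : T.IsTree) (hud : T.Adj u d) (hud' : T.Adj u' d')
    (hball : ColorIsoOn T φ (T.closedBall d (r + 1)) (T.closedBall d' (r + 1)) d d')
    (hcone : ColorIsoOn T φ (T.cone r d u) (T.cone r d' u') u u') :
    ColorIsoOn T φ (T.cone (r + 1) u d) (T.cone (r + 1) u' d') d d' := by
  obtain ⟨h, hh, rfl⟩ := hball
  have hcones : ∀ a ∈ T.neighborSet d,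
      ColorIsoOn T φ (T.cone r d a) (T.cone r (h d) (h a)) a (h a) := fun a ha =>
    ⟨h, hh.restrict_cone hT rfl (by simp) (by simp [dist_eq_one_iff_adj.mpr ha, add_comm]), rfl⟩
  obtain ⟨τ, hτ, hτcone⟩ := (hh.bijOn_neighborSet hT rfl (by simp)).exists_bijOn_sdiff_singleton
    (R := fun a b => ColorIsoOn T φ (T.cone r d a) (T.cone r (h d) b) a b) hcones hud.symm
    hud'.symm hcone
    fun a₁ _ a₂ h₂ _ _ _ _ e₁ e₂ e₃ => (e₁.trans (e₂.symm (mem_cone_self h₂))).trans e₃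
  rw [hT.cone_succ_eq hud, hT.cone_succ_eq hud']
  exact hT.colorIsoOn_star Set.sdiff_subset Set.sdiff_subset hτ (hh.color_eq (by simp)) hτcone

theorem IsTree.colorIsoOn_closedBall_of_forall_child (hT : T.IsTree)
    (hf : IsColorIsoOn T φ f (T.closedBall x n) (T.closedBall y n)) (hfx : f x = y)
    (hu : T.dist x u + r + 1 = n)
    (hchild : ∀ d, T.Adj u d → T.dist x d = T.dist x u + 1 →
      ColorIsoOn T φ (T.closedBall d (r + 1)) (T.closedBall (f d) (r + 1)) d (f d)) :
    ColorIsoOn T φ (T.closedBall u (r + 1 + 1)) (T.closedBall (f u) (r + 1 + 1)) u (f u) := by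
  have hu' : u ∈ T.closedBall x n := by simp only [mem_closedBall]; omega
  rw [hT.connected.closedBall_succ_eq, hT.connected.closedBall_succ_eq]
  refine hT.colorIsoOn_star subset_rfl subset_rfl (hf.bijOn_neighborSet hT hfx (by omega))
    (hf.color_eq hu') fun d (hud : T.Adj u d) => ?_
  rcases hT.dist_adj (x := x) hud with hd | hd
  · have hd' : d ∈ T.closedBall x n := by simp only [mem_closedBall]; omega
    exact hT.colorIsoOn_cone_succ hud ((hf.adj_iff hu' hd').2 hud) (hchild d hud hd)
      ⟨f, hf.restrict_cone hT hfx (by omega) (by omega), rfl⟩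
  · exact ⟨f, hf.restrict_cone hT hfx (by omega) (by omega), rfl⟩

end Branching

section Special

variable {A : Type*} {φ : V → A} {f : V → V} {x y z : V} {n : ℕ}

lemma _root_.BallEquiv.symm (h : BallEquiv T φ n x y) : BallEquiv T φ n y x := by
  rw [ballEquiv_iff_colorIsoOn] at h ⊢
  exact h.symm (by simp)

lemma _root_.BallEquiv.trans (h₁ : BallEquiv T φ n x y) (h₂ : BallEquiv T φ n y z) :
    BallEquiv T φ n x z := by
  rw [ballEquiv_iff_colorIsoOn] at h₁ h₂ ⊢
  exact h₁.trans h₂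

theorem IsTree.exists_dist_eq_not_ballEquiv (hT : T.IsTree)
    (hf : IsColorIsoOn T φ f (T.closedBall x n) (T.closedBall y n)) (hfx : f x = y)
    (hxy : ¬ BallEquiv T φ (n + 1) x y) {m : ℕ} (hm : m ≤ n) :
    ∃ u, T.dist x u = m ∧ ¬ BallEquiv T φ (n - m + 1) u (f u) := by
  induction m with
  | zero => exact ⟨x, dist_self, by rwa [hfx]⟩
  | succ m ih =>
    obtain ⟨u, hu, hnot⟩ := ih (by omega)
    by_contra! hall
    refine hnot ?_
    rw [show n - m + 1 = n - m - 1 + 1 + 1 by omega, ballEquiv_iff_colorIsoOn]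
    refine hT.colorIsoOn_closedBall_of_forall_child hf hfx (by omega) fun d _ hd => ?_
    rw [← ballEquiv_iff_colorIsoOn, show n - m - 1 + 1 = n - (m + 1) + 1 by omega]
    exact hall d (by omega)

theorem IsTree.exists_not_ballEquiv_succ_of_ballEquiv (hT : T.IsTree)
    (hE : BallEquiv T φ n x y) (hN : ¬ BallEquiv T φ (n + 1) x y) {m : ℕ} (hm : m ≤ n) :
    ∃ x' y', T.dist x x' = m ∧ T.dist y y' = m ∧
      ¬ BallEquiv T φ (n - m + 1) x' y' ∧ BallEquiv T φ (n - m) x' y' := by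
  obtain ⟨f, hf, hfx⟩ := ballEquiv_iff_colorIsoOn.mp hE
  obtain ⟨u, rfl, hu⟩ := hT.exists_dist_eq_not_ballEquiv hf hfx hN hm
  exact ⟨u, f u, rfl, hf.dist_apply_eq hT hfx hm, hu,
    ballEquiv_iff_colorIsoOn.mpr ⟨f, hf.restrict_closedBall hT hfx (by omega), rfl⟩⟩

theorem IsTree.exists_isSpecial_of_isSpecial (hT : T.IsTree) (hs : IsSpecial T φ n x) {l : ℕ}
    (hl : l ≤ n) : ∃ x', T.dist x x' = n - l ∧ IsSpecial T φ l x' := by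
  obtain ⟨y, z, hxy, hxz, hyz⟩ := hs
  obtain ⟨y', z', hy', -, hnot, hyz'⟩ :=
    hT.exists_not_ballEquiv_succ_of_ballEquiv (hxy.symm.trans hxz) hyz (Nat.sub_le n l)
  rw [Nat.sub_sub_self hl] at hnot hyz'
  obtain ⟨g, hg, rfl⟩ := ballEquiv_iff_colorIsoOn.mp hxy
  obtain ⟨x', hx', rfl⟩ := hg.bijOn.surjOn (show y' ∈ T.closedBall (g x) n by
    simp only [mem_closedBall]; omega)
  have hxx' : T.dist x x' = n - l := (hg.dist_apply_eq hT rfl hx').symm.trans hy'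
  have hx'y' : BallEquiv T φ l x' (g x') :=
    ballEquiv_iff_colorIsoOn.mpr ⟨g, hg.restrict_closedBall hT rfl (by omega), rfl⟩
  exact ⟨x', hxx', g x', z', hx'y', hx'y'.trans hyz', hnot⟩

end Special

end SimpleGraph

theorem stmt_4_general {V A : Type*} (T : SimpleGraph V) (φ : V → A)
    (htree : T.IsTree) :
    (∀ x y : V, ∀ n : ℕ, BallEquiv T φ n x y → ¬ BallEquiv T φ (n + 1) x y →
      ∀ m : ℕ, 1 ≤ m → m ≤ n →
        ∃ x' y' : V, T.dist x x' = m ∧ T.dist y y' = m ∧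
          ¬ BallEquiv T φ (n - m + 1) x' y' ∧ BallEquiv T φ (n - m) x' y') ∧
    (∀ x : V, ∀ n : ℕ, IsSpecial T φ n x → ∀ l : ℕ, l < n →
      ∃ x' : V, T.dist x x' = n - l ∧ IsSpecial T φ l x') :=
  ⟨fun _ _ _ hE hN _ _ hm => htree.exists_not_ballEquiv_succ_of_ballEquiv hE hN hm,
    fun _ _ hs _ hl => htree.exists_isSpecial_of_isSpecial hs hl.le⟩

theorem stmt_4 {V A : Type*} (T : SimpleGraph V) (φ : V → A) (k : ℕ)
    (hk : 2 ≤ k) (htree : T.IsTree) (hreg : ∀ v : V, (T.neighborSet v).ncard = k) :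
    (∀ x y : V, ∀ n : ℕ, BallEquiv T φ n x y → ¬ BallEquiv T φ (n + 1) x y →
      ∀ m : ℕ, 1 ≤ m → m ≤ n →
        ∃ x' y' : V, T.dist x x' = m ∧ T.dist y y' = m ∧
          ¬ BallEquiv T φ (n - m + 1) x' y' ∧ BallEquiv T φ (n - m) x' y') ∧
    (∀ x : V, ∀ n : ℕ, IsSpecial T φ n x → ∀ l : ℕ, l < n →
      ∃ x' : V, T.dist x x' = n - l ∧ IsSpecial T φ l x') :=
  stmt_4_general T φ htree
end

section
/- If some vertex of T is of bounded type (i.e., has a finite type set), then every vertex of T is of bounded type. -/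
open SimpleGraph

section Helpers

variable {V A : Type*} {T : SimpleGraph V} {φ : V → A}


private lemma walk_dist_le (hc : T.Connected) {n : ℕ} {a b : V}
    (f : {v : V // T.dist a v ≤ n} → {v : V // T.dist b v ≤ n})
    (hadj : ∀ u w : {v : V // T.dist a v ≤ n}, T.Adj (u : V) (w : V) → T.Adj (f u : V) (f w : V))
    {c v : V} (p : T.Walk c v) (hvb : T.dist a v ≤ n) :
    ∀ (hp : ∀ z ∈ p.support, T.dist a z ≤ n) (hcb : T.dist a c ≤ n),
      T.dist ((f ⟨c, hcb⟩ : {v : V // T.dist b v ≤ n}) : V)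
        ((f ⟨v, hvb⟩ : {v : V // T.dist b v ≤ n}) : V) ≤ p.length := by
  induction p with
  | nil =>
    intro hp hcb
    exact le_of_eq (SimpleGraph.dist_self)
  | @cons c c₂ v h q ih =>
    intro hp hcb
    have hc2 : T.dist a c₂ ≤ n := hp c₂ (by simp [SimpleGraph.Walk.support_cons])
    have hq : ∀ z ∈ q.support, T.dist a z ≤ n := fun z hz =>
      hp z (by simp [SimpleGraph.Walk.support_cons, hz])
    have hih := ih hvb hq hc2
    have hadj' : T.Adj ((f ⟨c, hcb⟩ : _) : V) ((f ⟨c₂, hc2⟩ : _) : V) :=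
      hadj ⟨c, hcb⟩ ⟨c₂, hc2⟩ h
    have h1 : T.dist ((f ⟨c, hcb⟩ : _) : V) ((f ⟨c₂, hc2⟩ : _) : V) ≤ 1 := by
      simpa using SimpleGraph.dist_le (SimpleGraph.Walk.cons hadj' SimpleGraph.Walk.nil)
    have htri := hc.dist_triangle (u := ((f ⟨c, hcb⟩ : _) : V))
      (v := ((f ⟨c₂, hc2⟩ : _) : V)) (w := ((f ⟨v, hvb⟩ : _) : V))
    simp only [SimpleGraph.Walk.length_cons]
    omega

end Helpers

section More
variable {V A : Type*} {T : SimpleGraph V} {φ : V → A}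

private lemma iso_dist_le (hc : T.Connected) {n : ℕ} {a b : V}
    (f : {v : V // T.dist a v ≤ n} → {v : V // T.dist b v ≤ n})
    (hadj : ∀ u w : {v : V // T.dist a v ≤ n}, T.Adj (u : V) (w : V) → T.Adj (f u : V) (f w : V))
    (c v : {v : V // T.dist a v ≤ n})
    (hsum : T.dist a (c : V) + T.dist (c : V) (v : V) ≤ n) :
    T.dist (f c : V) (f v : V) ≤ T.dist (c : V) (v : V) := by
  classical
  obtain ⟨p, hp⟩ := (hc.preconnected (c : V) (v : V)).exists_walk_length_eq_dist
  have hsupp : ∀ z ∈ p.support, T.dist a z ≤ n := by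
    intro z hz
    have h1 : T.dist (c : V) z ≤ p.length :=
      le_trans (SimpleGraph.dist_le (p.takeUntil z hz)) (SimpleGraph.Walk.length_takeUntil_le p hz)
    have h2 := hc.dist_triangle (u := a) (v := (c : V)) (w := z)
    omega
  have := walk_dist_le hc f hadj p v.2 hsupp c.2
  rwa [hp] at this

end More

section More2
variable {V A : Type*} {T : SimpleGraph V} {φ : V → A}

private lemma symm_props {n : ℕ} {a b : V}
    (f : {v : V // T.dist a v ≤ n} ≃ {v : V // T.dist b v ≤ n})
    (hcen : ((f ⟨a, by simp [SimpleGraph.dist_self]⟩ : {v : V // T.dist b v ≤ n}) : V) = b)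
    (hadj : ∀ u w : {v : V // T.dist a v ≤ n}, T.Adj (u : V) (w : V) ↔ T.Adj (f u : V) (f w : V)) :
    (((f.symm ⟨b, by simp [SimpleGraph.dist_self]⟩ : {v : V // T.dist a v ≤ n}) : V) = a) ∧
    (∀ u w : {v : V // T.dist b v ≤ n},
      T.Adj (u : V) (w : V) ↔ T.Adj (f.symm u : V) (f.symm w : V)) := by
  have hfa : f ⟨a, by simp [SimpleGraph.dist_self]⟩ = ⟨b, by simp [SimpleGraph.dist_self]⟩ :=
    Subtype.ext hcen
  constructor
  · rw [← hfa, Equiv.symm_apply_apply]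
  · intro u w
    have h := hadj (f.symm u) (f.symm w)
    rw [Equiv.apply_symm_apply, Equiv.apply_symm_apply] at h
    exact h.symm

private lemma iso_dist_center (hc : T.Connected) {n : ℕ} {a b : V}
    (f : {v : V // T.dist a v ≤ n} ≃ {v : V // T.dist b v ≤ n})
    (hcen : ((f ⟨a, by simp [SimpleGraph.dist_self]⟩ : {v : V // T.dist b v ≤ n}) : V) = b)
    (hadj : ∀ u w : {v : V // T.dist a v ≤ n}, T.Adj (u : V) (w : V) ↔ T.Adj (f u : V) (f w : V))
    (v : {v : V // T.dist a v ≤ n}) :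
    T.dist b (f v : V) = T.dist a (v : V) := by
  obtain ⟨hcen', hadj'⟩ := symm_props f hcen hadj
  have h1 : T.dist (f ⟨a, by simp [SimpleGraph.dist_self]⟩ : V) (f v : V) ≤ T.dist a (v : V) := by
    refine iso_dist_le hc f (fun u w h => (hadj u w).mp h) _ v ?_
    simpa [SimpleGraph.dist_self] using v.2
  rw [hcen] at h1
  have h2 : T.dist (f.symm ⟨b, by simp [SimpleGraph.dist_self]⟩ : V) (f.symm (f v) : V)
      ≤ T.dist b ((f v : _) : V) := by
    refine iso_dist_le hc f.symm (fun u w h => (hadj' u w).mp h) _ (f v) ?_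
    simpa [SimpleGraph.dist_self] using (f v).2
  rw [hcen', Equiv.symm_apply_apply] at h2
  omega

private lemma iso_dist_pair (hc : T.Connected) {n : ℕ} {a b : V}
    (f : {v : V // T.dist a v ≤ n} ≃ {v : V // T.dist b v ≤ n})
    (hcen : ((f ⟨a, by simp [SimpleGraph.dist_self]⟩ : {v : V // T.dist b v ≤ n}) : V) = b)
    (hadj : ∀ u w : {v : V // T.dist a v ≤ n}, T.Adj (u : V) (w : V) ↔ T.Adj (f u : V) (f w : V))
    (c v : {v : V // T.dist a v ≤ n})
    (hsum : T.dist a (c : V) + T.dist (c : V) (v : V) ≤ n) :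
    T.dist (f c : V) (f v : V) = T.dist (c : V) (v : V) := by
  obtain ⟨hcen', hadj'⟩ := symm_props f hcen hadj
  have h1 : T.dist (f c : V) (f v : V) ≤ T.dist (c : V) (v : V) :=
    iso_dist_le hc f (fun u w h => (hadj u w).mp h) c v hsum
  have hdc : T.dist b (f c : V) = T.dist a (c : V) := iso_dist_center hc f hcen hadj c
  have h2 : T.dist (f.symm (f c) : V) (f.symm (f v) : V) ≤ T.dist (f c : V) (f v : V) := by
    refine iso_dist_le hc f.symm (fun u w h => (hadj' u w).mp h) (f c) (f v) ?_
    omega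
  rw [Equiv.symm_apply_apply, Equiv.symm_apply_apply] at h2
  omega

end More2

section More3
variable {V A : Type*} {T : SimpleGraph V} {φ : V → A}

private lemma ballEquiv_refl (n : ℕ) (a : V) : BallEquiv T φ n a a :=
  ⟨Equiv.refl _, rfl, fun _ _ => Iff.rfl, fun _ => rfl⟩

private lemma ballEquiv_symm {n : ℕ} {a b : V} (h : BallEquiv T φ n a b) :
    BallEquiv T φ n b a := by
  obtain ⟨f, hcen, hadj, hcol⟩ := h
  obtain ⟨hcen', hadj'⟩ := symm_props f hcen hadj
  refine ⟨f.symm, hcen', hadj', ?_⟩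
  intro v
  have h := hcol (f.symm v)
  rw [Equiv.apply_symm_apply] at h
  exact h.symm

private lemma ballEquiv_trans {n : ℕ} {a b c : V} (h1 : BallEquiv T φ n a b)
    (h2 : BallEquiv T φ n b c) : BallEquiv T φ n a c := by
  obtain ⟨f, hcenf, hadjf, hcolf⟩ := h1
  obtain ⟨g, hceng, hadjg, hcolg⟩ := h2
  have hfa : f ⟨a, by simp [SimpleGraph.dist_self]⟩ = ⟨b, by simp [SimpleGraph.dist_self]⟩ :=
    Subtype.ext hcenf
  refine ⟨f.trans g, ?_, ?_, ?_⟩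
  · rw [Equiv.trans_apply, hfa]; exact hceng
  · intro u w
    exact (hadjf u w).trans (hadjg (f u) (f w))
  · intro v
    exact (hcolg (f v)).trans (hcolf v)

private lemma ballEquiv_restrict (hc : T.Connected) {n : ℕ} {a b : V}
    (h : BallEquiv T φ n a b) (c : V) (m : ℕ) (hm : T.dist a c + m ≤ n) :
    ∃ c' : V, T.dist b c' = T.dist a c ∧ BallEquiv T φ m c c' ∧ (c = a → c' = b) := by
  obtain ⟨f, hcen, hadj, hcol⟩ := h
  obtain ⟨hcen', hadj'⟩ := symm_props f hcen hadj
  have hca : T.dist a c ≤ n := le_trans (Nat.le_add_right _ _) hm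
  refine ⟨(f ⟨c, hca⟩ : V), iso_dist_center hc f hcen hadj ⟨c, hca⟩, ?_, ?_⟩
  swap
  · rintro rfl
    exact hcen
  -- build the restricted equivalence
  have memA : ∀ v : V, T.dist c v ≤ m → T.dist a v ≤ n := by
    intro v hv
    have := hc.dist_triangle (u := a) (v := c) (w := v)
    omega
  have hdc : T.dist b (f ⟨c, hca⟩ : V) = T.dist a c := iso_dist_center hc f hcen hadj ⟨c, hca⟩
  have memB : ∀ w : V, T.dist (f ⟨c, hca⟩ : V) w ≤ m → T.dist b w ≤ n := by
    intro w hw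
    have := hc.dist_triangle (u := b) (v := (f ⟨c, hca⟩ : V)) (w := w)
    omega
  have hTo : ∀ v : {v : V // T.dist c v ≤ m},
      T.dist (f ⟨c, hca⟩ : V) (f ⟨(v : V), memA v v.2⟩ : V) ≤ m := by
    intro v
    have := iso_dist_pair hc f hcen hadj ⟨c, hca⟩ ⟨(v : V), memA v v.2⟩
      (show T.dist a c + T.dist c (v : V) ≤ n by have := v.2; omega)
    simp only [this]
    exact v.2
  have hFrom : ∀ w : {w : V // T.dist (f ⟨c, hca⟩ : V) w ≤ m},
      T.dist c (f.symm ⟨(w : V), memB w w.2⟩ : V) ≤ m := by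
    intro w
    have hfc : T.dist b (f ⟨c, hca⟩ : V) ≤ n := by omega
    have hpair := iso_dist_pair hc f.symm hcen' hadj' ⟨(f ⟨c, hca⟩ : V), hfc⟩
      ⟨(w : V), memB w w.2⟩
      (show T.dist b (f ⟨c, hca⟩ : V) + T.dist (f ⟨c, hca⟩ : V) (w : V) ≤ n
        by have := w.2; omega)
    have hsc : f.symm ⟨(f ⟨c, hca⟩ : V), hfc⟩ = ⟨c, hca⟩ := by
      have : (⟨(f ⟨c, hca⟩ : V), hfc⟩ : {v : V // T.dist b v ≤ n}) = f ⟨c, hca⟩ :=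
        Subtype.ext rfl
      rw [this, Equiv.symm_apply_apply]
    rw [hsc] at hpair
    simp only [hpair]
    exact w.2
  refine ⟨⟨fun v => ⟨(f ⟨(v : V), memA v v.2⟩ : V), hTo v⟩,
      fun w => ⟨(f.symm ⟨(w : V), memB w w.2⟩ : V), hFrom w⟩, ?_, ?_⟩, ?_, ?_, ?_⟩
  · intro v
    apply Subtype.ext
    show (f.symm ⟨(f ⟨(v : V), memA v v.2⟩ : V), _⟩ : V) = (v : V)
    have h1 : (⟨(f ⟨(v : V), memA v v.2⟩ : V), memB _ (hTo v)⟩ : {v : V // T.dist b v ≤ n})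
        = f ⟨(v : V), memA v v.2⟩ := Subtype.ext rfl
    rw [h1, Equiv.symm_apply_apply]
  · intro w
    apply Subtype.ext
    show (f ⟨(f.symm ⟨(w : V), memB w w.2⟩ : V), _⟩ : V) = (w : V)
    have h1 : (⟨(f.symm ⟨(w : V), memB w w.2⟩ : V), memA _ (hFrom w)⟩ : {v : V // T.dist a v ≤ n})
        = f.symm ⟨(w : V), memB w w.2⟩ := Subtype.ext rfl
    rw [h1, Equiv.apply_symm_apply]
  · rfl
  · intro u w
    exact hadj ⟨(u : V), memA u u.2⟩ ⟨(w : V), memA w w.2⟩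
  · intro v
    exact hcol ⟨(v : V), memA v v.2⟩

private lemma ballEquiv_mono (hc : T.Connected) {n m : ℕ} {a b : V}
    (h : BallEquiv T φ n a b) (hmn : m ≤ n) : BallEquiv T φ m a b := by
  obtain ⟨c', -, hbe, heq⟩ := ballEquiv_restrict hc h a m (by simp [SimpleGraph.dist_self]; omega)
  rwa [heq rfl] at hbe

end More3

section More4
variable {V : Type*} {T : SimpleGraph V}

private lemma ball_finite (hc : T.Connected) (hnb : ∀ v : V, (T.neighborSet v).Finite)
    (x : V) : ∀ n : ℕ, {v : V | T.dist x v ≤ n}.Finite := by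
  intro n
  induction n with
  | zero =>
    apply Set.Finite.subset (Set.finite_singleton x)
    intro v hv
    have h0 : T.dist x v = 0 := Nat.le_zero.mp hv
    simp [← hc.dist_eq_zero_iff.mp h0]
  | succ n ih =>
    apply Set.Finite.subset (ih.union (Set.Finite.biUnion ih (fun w _ => hnb w)))
    intro v hv
    rcases Nat.lt_or_ge (T.dist x v) (n + 1) with hlt | hge
    · exact Or.inl (Nat.lt_succ_iff.mp hlt)
    · have hd : T.dist v x = n + 1 := by
        rw [SimpleGraph.dist_comm]
        have : T.dist x v ≤ n + 1 := hv
        omega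
      obtain ⟨p, hp⟩ := (hc.preconnected v x).exists_walk_length_eq_dist
      cases p with
      | nil => rw [hd] at hp; simp at hp
      | @cons _ w _ h' q =>
        right
        refine Set.mem_biUnion (show T.dist x w ≤ n from ?_) h'.symm
        have h1 : T.dist w x ≤ q.length := SimpleGraph.dist_le q
        have h2 : q.length + 1 = n + 1 := by
          have := hp
          rw [SimpleGraph.Walk.length_cons] at this
          omega
        rw [SimpleGraph.dist_comm]
        omega
end More4


theorem stmt_6 {V A : Type*} (T : SimpleGraph V) (φ : V → A) (k : ℕ)
    (hk : 2 ≤ k) (htree : T.IsTree) (hreg : ∀ v : V, (T.neighborSet v).ncard = k)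
    (h : ∃ x : V, (TypeSet T φ x).Finite) :
    ∀ y : V, (TypeSet T φ y).Finite := by
  classical
  obtain ⟨x, hx⟩ := h
  intro y
  have hc : T.Connected := htree.isConnected
  have hnb : ∀ v : V, (T.neighborSet v).Finite := by
    intro v
    by_contra hf
    have h0 : (T.neighborSet v).ncard = 0 := Set.Infinite.ncard hf
    rw [hreg v] at h0
    omega
  -- a bound beyond which x has no special balls
  obtain ⟨N0, hN0⟩ := hx.bddAbove
  set N : ℕ := N0 + 1 with hNdef
  have hN : ∀ m, N ≤ m → m ∉ TypeSet T φ x := by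
    intro m hm hmem
    have := hN0 hmem
    omega
  have step : ∀ m, N ≤ m → ∀ p, BallEquiv T φ m x p → BallEquiv T φ (m + 1) x p := by
    intro m hm p hp
    by_contra hcon
    exact hN m hm ⟨x, p, ballEquiv_refl m x, hp, hcon⟩
  have P1 : ∀ p : V, BallEquiv T φ N x p → ∀ M, BallEquiv T φ M x p := by
    intro p hp M
    rcases Nat.le_total M N with hMN | hNM
    · exact ballEquiv_mono hc hp hMN
    · have key : ∀ j : ℕ, BallEquiv T φ (N + j) x p := by
        intro j
        induction j with
        | zero => exact hp
        | succ j ihj => exact step (N + j) (Nat.le_add_right _ _) p ihj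
      have := key (M - N)
      rwa [show N + (M - N) = M by omega] at this
  set d : ℕ := T.dist x y with hddef
  have Bfin : {v : V | T.dist x v ≤ d}.Finite := ball_finite hc hnb x d
  -- a uniform bound detecting non-full-equivalence within the ball of radius d around x
  obtain ⟨N₁, hN₁⟩ : ∃ N₁ : ℕ, ∀ a b : V, T.dist x a ≤ d → T.dist x b ≤ d →
      ¬ (∀ M, BallEquiv T φ M a b) → ¬ BallEquiv T φ N₁ a b := by
    set S : Set (V × V) :=
      {q | T.dist x q.1 ≤ d ∧ T.dist x q.2 ≤ d ∧ ¬ ∀ M, BallEquiv T φ M q.1 q.2} with hSdef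
    have hS : S.Finite := (Bfin.prod Bfin).subset (fun q hq => ⟨hq.1, hq.2.1⟩)
    obtain ⟨N₁, hub⟩ :=
      (hS.image (fun q : V × V => sInf {M | ¬ BallEquiv T φ M q.1 q.2})).bddAbove
    refine ⟨N₁ + 1, ?_⟩
    intro a b ha hb hng hbe
    have hqS : (a, b) ∈ S := ⟨ha, hb, hng⟩
    have hne : {M | ¬ BallEquiv T φ M a b}.Nonempty := by
      rcases not_forall.mp hng with ⟨M, hM⟩
      exact ⟨M, hM⟩
    have hmem := Nat.sInf_mem hne
    have hle : sInf {M | ¬ BallEquiv T φ M a b} ≤ N₁ :=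
      hub (Set.mem_image_of_mem (fun q : V × V => sInf {M | ¬ BallEquiv T φ M q.1 q.2}) hqS)
    exact hmem (ballEquiv_mono hc hbe (by omega))
  set N' : ℕ := d + (N + N₁) with hN'def
  -- key determinacy property at y
  have Qy : ∀ p : V, BallEquiv T φ N' y p → ∀ M, BallEquiv T φ M y p := by
    intro p hp
    obtain ⟨x', hdx', hbx', -⟩ := ballEquiv_restrict hc hp x (N + N₁)
      (by rw [SimpleGraph.dist_comm]; try omega)
    -- hdx' : T.dist p x' = T.dist y x, hbx' : BallEquiv (N+N₁) x x'
    have hxx' : ∀ M, BallEquiv T φ M x x' :=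
      P1 x' (ballEquiv_mono hc hbx' (by omega))
    have hdist : T.dist x' p = d := by
      rw [SimpleGraph.dist_comm, hdx', SimpleGraph.dist_comm]
    have goodp : ∀ M : ℕ, ∃ q : V, T.dist x q ≤ d ∧ BallEquiv T φ M p q := by
      intro M
      have hMx := ballEquiv_symm (hxx' (M + d))
      obtain ⟨qq, hq1, hq2, -⟩ := ballEquiv_restrict hc hMx p M (by omega)
      exact ⟨qq, le_of_eq (by rw [hq1, hdist]), hq2⟩
    choose q hq1 hq2 using goodp
    set s : Set V := {v : V | T.dist x v ≤ d} with hsdef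
    haveI : Finite s := Bfin.to_subtype
    set f : ℕ → s := fun M => ⟨q M, hq1 M⟩ with hfdef
    obtain ⟨p₀, hp₀⟩ := Finite.exists_infinite_fiber f
    have hinf : (f ⁻¹' {p₀}).Infinite := Set.infinite_coe_iff.mp hp₀
    have good₀ : ∀ M, BallEquiv T φ M p (p₀ : V) := by
      intro M
      obtain ⟨M', hM'mem, hMM'⟩ := hinf.exists_gt M
      have hqM' : q M' = (p₀ : V) := congrArg Subtype.val hM'mem
      exact ballEquiv_mono hc (hqM' ▸ hq2 M') (le_of_lt hMM')
    have hyp₀ : BallEquiv T φ N' y (p₀ : V) := ballEquiv_trans hp (good₀ N')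
    have hally : ∀ M, BallEquiv T φ M y (p₀ : V) := by
      by_contra hng
      push_neg at hng
      have := hN₁ y (p₀ : V) (le_of_eq hddef.symm) p₀.2 (by
        intro hall
        rcases hng with ⟨M, hM⟩
        exact hM (hall M))
      exact this (ballEquiv_mono hc hyp₀ (by omega))
    intro M
    exact ballEquiv_trans (hally M) (ballEquiv_symm (good₀ M))
  -- conclude
  apply Set.Finite.subset (Set.finite_Iio N')
  intro n hn
  by_contra hge
  have hge' : N' ≤ n := le_of_not_gt hge
  obtain ⟨u, v, hu, hv, huv⟩ := hn
  have hu' := Qy u (ballEquiv_mono hc hu hge') (n + 1)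
  have hv' := Qy v (ballEquiv_mono hc hv hge') (n + 1)
  exact huv (ballEquiv_trans (ballEquiv_symm hu') hv')
end

section
/- Every eventually periodic coloring φ of T is of bounded type: every vertex of T has a finite type set. -/
open SimpleGraph

/-!
Let `S n` be the set of vertices whose colored `n`-ball is equivalent to that of `x`. It
decreases with `n`, and `n` can only be a type of `x` if `S (n + 1) ≠ S n`, so it suffices that
`S` is eventually constant. If some `S n` lies within distance `n` of the finite set `K`, it is
finite (balls are finite) and the chain stabilizes. Otherwise every `S n` has a vertex whose
`n`-ball avoids `K`; as `T - K` has finitely many components, infinitely many of these balls lie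
in one component, where `φ` agrees with a periodic coloring `ψ`. The vertices whose `ψ`-ball
matches the `φ`-ball of `x` form a decreasing chain of unions of orbits of the symmetry group of
`ψ`, so it stabilizes and has a vertex `y` in common. By Kőnig's lemma the isomorphisms of the
`φ`-balls around `x` with the `ψ`-balls around `y` glue to an automorphism `g` with `ψ ∘ g = φ`,
and `S n` is the preimage under `g` of the stable chain.
-/

open Filter

namespace SimpleGraph

variable {V W : Type*} {G : SimpleGraph V} {G' : SimpleGraph W}

theorem Hom.dist_map_le (f : G →g G') {u v : V} (h : G.Reachable u v) :
    G'.dist (f u) (f v) ≤ G.dist u v := by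
  obtain ⟨p, hp⟩ := h.exists_walk_length_eq_dist
  simpa [hp] using dist_le (p.map f)

theorem Iso.dist_map (g : G ≃g G') (u v : V) : G'.dist (g u) (g v) = G.dist u v := by
  by_cases h : G.Reachable u v
  · refine le_antisymm (g.toHom.dist_map_le h) ?_
    simpa using g.symm.toHom.dist_map_le (h.map g.toHom)
  · have h' : ¬ G'.Reachable (g u) (g v) := fun h' => h (by simpa using h'.map g.symm.toHom)
    rw [dist_eq_zero_of_not_reachable h, dist_eq_zero_of_not_reachable h']

theorem Connected.exists_adj_dist_eq (hconn : G.Connected) {x v : V} {m : ℕ}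
    (h : G.dist x v = m + 1) : ∃ u, G.Adj u v ∧ G.dist x u = m := by
  obtain ⟨p, hp⟩ := hconn.exists_walk_length_eq_dist v x
  rw [dist_comm] at h
  cases p with
  | nil => simp at h
  | @cons _ u _ hadj q =>
    have hq : G.dist u x ≤ q.length := dist_le q
    have htri : G.dist v x ≤ G.dist v u + G.dist u x := hconn.dist_triangle
    rw [dist_eq_one_iff_adj.2 hadj] at htri
    simp only [Walk.length_cons] at hp
    exact ⟨u, hadj.symm, by rw [dist_comm]; omega⟩

theorem Connected.finite_setOf_dist_le [G.LocallyFinite] (hconn : G.Connected) (x : V) (n : ℕ) :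
    {v | G.dist x v ≤ n}.Finite := by
  induction n with
  | zero => simp [hconn.dist_eq_zero_iff]
  | succ n ih =>
    refine ((ih.biUnion fun u _ => (G.neighborSet u).toFinite).union ih).subset fun v hv => ?_
    rcases Nat.le_succ_iff.1 hv with hv | hv
    · exact Or.inr hv
    · obtain ⟨u, hu, hxu⟩ := hconn.exists_adj_dist_eq hv
      exact Or.inl (Set.mem_biUnion hxu.le hu)

end SimpleGraph

section Stabilization

variable {α β : Type*}

theorem Antitone.eventuallyConst [PartialOrder β] [WellFoundedLT β] {f : ℕ → β}
    (hf : Antitone f) : EventuallyConst f atTop :=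
  let ⟨N, hN⟩ := WellFoundedLT.antitone_chain_condition hf
  eventuallyConst_atTop.2 ⟨N, fun n hn => (hN n hn).symm⟩

variable {S : ℕ → Set α}

theorem Antitone.eventuallyConst_of_finite (hS : Antitone S) {n₀ : ℕ} (hfin : (S n₀).Finite) :
    EventuallyConst S atTop := by
  have : Finite (S n₀) := hfin.to_subtype
  have hrestr : EventuallyConst (fun n => ((↑) : S n₀ → α) ⁻¹' S n) atTop :=
    Antitone.eventuallyConst fun _ _ hmn => Set.preimage_mono (hS hmn)
  refine (hrestr.comp (Set.image (↑))).congr (eventually_atTop.2 ⟨n₀, fun n hn => ?_⟩)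
  simp [Subtype.image_preimage_coe, Set.inter_eq_right.2 (hS hn)]

theorem Antitone.eventuallyConst_of_finite_quot {r : α → α → Prop} [Finite (Quot r)]
    (hS : Antitone S) (hr : ∀ n a b, r a b → (a ∈ S n ↔ b ∈ S n)) :
    EventuallyConst S atTop := by
  have himage : EventuallyConst (fun n => Quot.mk r '' S n) atTop :=
    Antitone.eventuallyConst fun _ _ hmn => Set.image_mono (hS hmn)
  convert himage.comp (Set.preimage (Quot.mk r)) using 1
  ext n a
  have hiff {a b : α} (h : Relation.EqvGen r a b) : a ∈ S n ↔ b ∈ S n := by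
    induction h with
    | rel _ _ h => exact hr n _ _ h
    | refl => exact Iff.rfl
    | symm _ _ _ ih => exact ih.symm
    | trans _ _ _ _ _ ih ih' => exact ih.trans ih'
  exact ⟨fun ha => ⟨a, ha, rfl⟩, fun ⟨b, hb, hba⟩ => (hiff (Quot.eqvGen_exact hba)).1 hb⟩

theorem Antitone.exists_forall_mem_of_eventuallyConst (hS : Antitone S)
    (hc : EventuallyConst S atTop) (hne : ∀ n, (S n).Nonempty) : ∃ a, ∀ n, a ∈ S n := by
  obtain ⟨N, hN⟩ := eventuallyConst_atTop.1 hc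
  obtain ⟨a, ha⟩ := hne N
  refine ⟨a, fun n => ?_⟩
  rcases le_total N n with h | h
  · exact hN n h ▸ ha
  · exact hS h ha

end Stabilization

section BallIso

variable {V A : Type*} {T : SimpleGraph V}

abbrev Ball (T : SimpleGraph V) (x : V) (n : ℕ) : Type _ := {v : V // T.dist x v ≤ n}

def Ball.center (T : SimpleGraph V) (x : V) (n : ℕ) : Ball T x n := ⟨x, by simp⟩

/-- Two colorings are allowed so that the balls of `φ` can be compared with those of a periodic
coloring `ψ`. -/
@[ext]
structure BallIso (T : SimpleGraph V) (φ ψ : V → A) (n : ℕ) (x y : V) where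
  toEquiv : Ball T x n ≃ Ball T y n
  map_center : (toEquiv (Ball.center T x n) : V) = y
  map_adj_iff : ∀ u w : Ball T x n, T.Adj u w ↔ T.Adj (toEquiv u) (toEquiv w)
  map_color : ∀ v, ψ (toEquiv v) = φ v

theorem ballEquiv_iff_nonempty_ballIso {φ : V → A} {n : ℕ} {x y : V} :
    BallEquiv T φ n x y ↔ Nonempty (BallIso T φ φ n x y) :=
  ⟨fun ⟨f, hc, hadj, hcol⟩ => ⟨⟨f, hc, hadj, hcol⟩⟩,
    fun ⟨F⟩ => ⟨F.toEquiv, F.map_center, F.map_adj_iff, F.map_color⟩⟩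

namespace BallIso

variable {φ ψ χ : V → A} {m n : ℕ} {x y z : V}

instance : CoeFun (BallIso T φ ψ n x y) (fun _ => Ball T x n → Ball T y n) :=
  ⟨fun F => F.toEquiv⟩

theorem apply_center (F : BallIso T φ ψ n x y) : F (Ball.center T x n) = Ball.center T y n :=
  Subtype.ext F.map_center

def symm (F : BallIso T φ ψ n x y) : BallIso T ψ φ n y x where
  toEquiv := F.toEquiv.symm
  map_center := by rw [← F.apply_center]; exact congrArg Subtype.val (F.toEquiv.symm_apply_apply _)
  map_adj_iff u w := by
    simpa using (F.map_adj_iff (F.toEquiv.symm u) (F.toEquiv.symm w)).symm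
  map_color v := by simpa using (F.map_color (F.toEquiv.symm v)).symm

def trans (F : BallIso T φ ψ n x y) (G : BallIso T ψ χ n y z) : BallIso T φ χ n x z where
  toEquiv := F.toEquiv.trans G.toEquiv
  map_center := by
    have := G.map_center
    rwa [← F.apply_center] at this
  map_adj_iff u w := (F.map_adj_iff u w).trans (G.map_adj_iff _ _)
  map_color v := (G.map_color _).trans (F.map_color v)

def ofEqOn (h : ∀ v : Ball T x n, ψ v = φ v) : BallIso T φ ψ n x x :=
  ⟨Equiv.refl _, rfl, fun _ _ => Iff.rfl, h⟩

def ofGraphIso (g : T ≃g T) (hg : ∀ v, ψ (g v) = φ v) (n : ℕ) (x : V) :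
    BallIso T φ ψ n x (g x) where
  toEquiv := g.toEquiv.subtypeEquiv fun v => by simp [g.dist_map]
  map_center := rfl
  map_adj_iff _ _ := g.map_adj_iff.symm
  map_color v := hg v

theorem dist_le (hconn : T.Connected) (F : BallIso T φ ψ n x y) (v : Ball T x n) :
    T.dist y (F v) ≤ T.dist x v := by
  obtain ⟨v, hv⟩ := v
  induction hd : T.dist x v generalizing v with
  | zero =>
    obtain rfl := hconn.dist_eq_zero_iff.1 hd
    rw [show (⟨x, hv⟩ : Ball T x n) = Ball.center T x n from rfl, F.apply_center]
    simp [Ball.center]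
  | succ d ih =>
    obtain ⟨u, huv, hxu⟩ := hconn.exists_adj_dist_eq hd
    have hu : T.dist x u ≤ n := by omega
    have hadj : T.Adj (F ⟨u, hu⟩) (F ⟨v, hv⟩) := (F.map_adj_iff ⟨u, hu⟩ ⟨v, hv⟩).1 huv
    have htri := hconn.dist_triangle (u := y) (v := F ⟨u, hu⟩) (w := F ⟨v, hv⟩)
    rw [dist_eq_one_iff_adj.2 hadj] at htri
    have := ih u hu hxu
    omega

def restrict (hconn : T.Connected) (F : BallIso T φ ψ n x y) (hmn : m ≤ n) :
    BallIso T φ ψ m x y where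
  toEquiv :=
    { toFun v := ⟨F ⟨v, v.2.trans hmn⟩, (F.dist_le hconn _).trans v.2⟩
      invFun w := ⟨F.symm ⟨w, w.2.trans hmn⟩, (F.symm.dist_le hconn _).trans w.2⟩
      left_inv v := by simp [symm]
      right_inv w := by simp [symm] }
  map_center := F.map_center
  map_adj_iff u w := F.map_adj_iff ⟨u, u.2.trans hmn⟩ ⟨w, w.2.trans hmn⟩
  map_color v := F.map_color ⟨v, v.2.trans hmn⟩

theorem restrict_apply (hconn : T.Connected) (F : BallIso T φ ψ n x y) (hmn : m ≤ n)
    (v : Ball T x m) : (F.restrict hconn hmn v : V) = F ⟨v, v.2.trans hmn⟩ :=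
  rfl

theorem restrict_symm_apply (hconn : T.Connected) (F : BallIso T φ ψ n x y) (hmn : m ≤ n)
    (w : Ball T y m) :
    ((F.restrict hconn hmn).symm w : V) = F.symm ⟨w, w.2.trans hmn⟩ :=
  rfl

end BallIso

end BallIso

section Koenig

variable {V A : Type*} {T : SimpleGraph V} {φ ψ : V → A} {x y : V}

theorem exists_graphIso_of_compatible (hconn : T.Connected) (F : ∀ n, BallIso T φ ψ n x y)
    (hF : ∀ ⦃i j⦄ (hij : i ≤ j), (F j).restrict hconn hij = F i) :
    ∃ g : T ≃g T, ∀ v, ψ (g v) = φ v := by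
  have hval (n : ℕ) (v : Ball T x n) : (F n v : V) = F (T.dist x v) ⟨v, le_rfl⟩ := by
    rw [← hF v.2, BallIso.restrict_apply]
  have hval' (n : ℕ) (w : Ball T y n) :
      ((F n).symm w : V) = (F (T.dist y w)).symm ⟨w, le_rfl⟩ := by
    rw [← hF w.2, BallIso.restrict_symm_apply]
  let g : V ≃ V :=
    { toFun v := F (T.dist x v) ⟨v, le_rfl⟩
      invFun w := (F (T.dist y w)).symm ⟨w, le_rfl⟩
      left_inv v := by
        simp only
        rw [← hval' (T.dist x v) (F _ ⟨v, le_rfl⟩)]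
        simp [BallIso.symm]
      right_inv w := by
        simp only
        rw [← hval (T.dist y w) ((F _).symm ⟨w, le_rfl⟩)]
        simp [BallIso.symm] }
  refine ⟨⟨g, fun {u w} => ?_⟩, fun v => (F _).map_color _⟩
  let n := max (T.dist x u) (T.dist x w)
  have hu : T.dist x u ≤ n := le_max_left _ _
  have hw : T.dist x w ≤ n := le_max_right _ _
  change T.Adj (F _ ⟨u, le_rfl⟩) (F _ ⟨w, le_rfl⟩) ↔ _
  rw [← hval n ⟨u, hu⟩, ← hval n ⟨w, hw⟩]
  exact ((F n).map_adj_iff ⟨u, hu⟩ ⟨w, hw⟩).symm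

theorem exists_graphIso_of_forall_ballIso [T.LocallyFinite] (hconn : T.Connected)
    (h : ∀ n, Nonempty (BallIso T φ ψ n x y)) : ∃ g : T ≃g T, ∀ v, ψ (g v) = φ v := by
  have (z : V) (n : ℕ) : Finite (Ball T z n) := (hconn.finite_setOf_dist_le z n).to_subtype
  have (n : ℕ) : Finite (BallIso T φ ψ n x y) :=
    Finite.of_injective BallIso.toEquiv fun _ _ => BallIso.ext
  obtain ⟨F, hF⟩ := exists_seq_forall_proj_of_forall_finite (α := fun n => BallIso T φ ψ n x y)
    (fun hij F => F.restrict hconn hij) (fun _ _ => rfl) (fun _ _ _ _ _ _ => rfl)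
    (fun _ _ => Set.toFinite _)
  exact exists_graphIso_of_compatible hconn F hF

end Koenig

section BallClass

variable {V A : Type*} {T : SimpleGraph V} {φ ψ χ : V → A} {x : V}

def ballClass (T : SimpleGraph V) (φ ψ : V → A) (x : V) (n : ℕ) : Set V :=
  {y | Nonempty (BallIso T φ ψ n x y)}

theorem antitone_ballClass (hconn : T.Connected) : Antitone (ballClass T φ ψ x) :=
  fun _ _ hmn _ ⟨F⟩ => ⟨F.restrict hconn hmn⟩

theorem mem_ballClass_iff_of_graphIso (g : T ≃g T) (hg : ∀ v, χ (g v) = ψ v) (n : ℕ) (y : V) :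
    g y ∈ ballClass T φ χ x n ↔ y ∈ ballClass T φ ψ x n :=
  ⟨fun ⟨F⟩ => ⟨F.trans (BallIso.ofGraphIso g hg n y).symm⟩,
    fun ⟨F⟩ => ⟨F.trans (BallIso.ofGraphIso g hg n y)⟩⟩

theorem typeSet_finite_of_eventuallyConst (h : EventuallyConst (ballClass T φ φ x) atTop) :
    (TypeSet T φ x).Finite := by
  obtain ⟨N, hN⟩ := eventuallyConst_atTop.1 h
  refine (Set.finite_Iio N).subset fun n ⟨y, z, hy, hz, hyz⟩ => ?_
  by_contra hn
  have hS : ballClass T φ φ x n = ballClass T φ φ x (n + 1) := by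
    rw [Set.mem_Iio, not_lt] at hn
    rw [hN n hn, hN (n + 1) (by omega)]
  rw [ballEquiv_iff_nonempty_ballIso] at hy hz hyz
  obtain ⟨F⟩ : y ∈ ballClass T φ φ x (n + 1) := hS ▸ hy
  obtain ⟨G⟩ : z ∈ ballClass T φ φ x (n + 1) := hS ▸ hz
  exact hyz ⟨F.symm.trans G⟩

theorem IsPeriodicColoring.eventuallyConst_ballClass (hconn : T.Connected)
    (hψ : IsPeriodicColoring T ψ) (φ : V → A) (x : V) :
    EventuallyConst (ballClass T φ ψ x) atTop := by
  obtain ⟨Γ, hΓadj, hΓcol, hΓfin⟩ := hψ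
  refine (antitone_ballClass hconn).eventuallyConst_of_finite_quot
    (r := fun a b => ∃ γ ∈ Γ, γ a = b) ?_
  rintro n w _ ⟨γ, hγ, rfl⟩
  exact (mem_ballClass_iff_of_graphIso ⟨γ, hΓadj γ hγ _ _⟩ (hΓcol γ hγ) n w).symm

theorem eventuallyConst_ballClass_of_periodic [T.LocallyFinite] (hconn : T.Connected)
    (hψ : IsPeriodicColoring T ψ) (hne : ∀ n, (ballClass T φ ψ x n).Nonempty) :
    EventuallyConst (ballClass T φ φ x) atTop := by
  have hS := hψ.eventuallyConst_ballClass hconn φ x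
  obtain ⟨y, hy⟩ := (antitone_ballClass hconn).exists_forall_mem_of_eventuallyConst hS hne
  obtain ⟨g, hg⟩ := exists_graphIso_of_forall_ballIso hconn hy
  convert hS.comp (Set.preimage g) using 1
  ext n z
  exact (mem_ballClass_iff_of_graphIso g hg n z).symm

end BallClass

section EventuallyPeriodic

variable {V A : Type*} {T : SimpleGraph V} {φ : V → A} {x : V}

theorem mem_componentComplMk_of_dist_le (hconn : T.Connected) {K : Set V} {z : V} {n : ℕ}
    (hz : ∀ κ ∈ K, n < T.dist κ z) (hzK : z ∉ K) {v : V} (hv : T.dist z v ≤ n) :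
    v ∈ T.componentComplMk hzK := by
  induction hd : T.dist z v generalizing v with
  | zero =>
    obtain rfl := hconn.dist_eq_zero_iff.1 hd
    exact componentComplMk_mem T hzK
  | succ d ih =>
    obtain ⟨u, huv, hzu⟩ := hconn.exists_adj_dist_eq hd
    obtain ⟨huK, hu⟩ := ih (by omega) hzu
    have hvK : v ∉ K := fun hvK => by have := hz v hvK; rw [dist_comm] at this; omega
    exact ⟨hvK, (componentComplMk_eq_of_adj T hvK huK huv.symm).trans hu⟩

theorem exists_periodic_ballClass_nonempty [T.LocallyFinite] (hconn : T.Connected) {K : Set V}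
    (hKfin : K.Finite)
    (hK : ∀ v : (Kᶜ : Set V), ∃ ψ : V → A, IsPeriodicColoring T ψ ∧
      ∀ w : (Kᶜ : Set V), (T.induce (Kᶜ : Set V)).Reachable v w → ψ (w : V) = φ (w : V))
    (hfar : ∀ n, ∃ z ∈ ballClass T φ φ x n, ∀ κ ∈ K, n < T.dist κ z) :
    ∃ ψ : V → A, IsPeriodicColoring T ψ ∧ ∀ n, (ballClass T φ ψ x n).Nonempty := by
  choose z hzS hzfar using hfar
  have hzK (n : ℕ) : z n ∉ K := fun h => by simpa using hzfar n _ h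
  obtain ⟨K, rfl⟩ := hKfin.exists_finset_coe
  have : Fact T.Preconnected := ⟨hconn.preconnected⟩
  obtain ⟨C, hC⟩ := Finite.exists_infinite_fiber fun n => T.componentComplMk (hzK n)
  obtain ⟨v, hvK, rfl⟩ := C.exists_eq_mk
  obtain ⟨ψ, hψ, hψφ⟩ := hK ⟨v, hvK⟩
  refine ⟨ψ, hψ, fun n => ?_⟩
  obtain ⟨m, hmC, hnm⟩ := Set.Infinite.exists_gt (Set.infinite_coe_iff.1 hC) n
  obtain ⟨F⟩ := hzS m
  have hagree (w : Ball T (z m) m) : ψ w = φ w := by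
    obtain ⟨hwK, hw⟩ := mem_componentComplMk_of_dist_le hconn (hzfar m) (hzK m) w.2
    exact hψφ ⟨w, hwK⟩ (ConnectedComponent.exact (hw.trans hmC)).symm
  exact ⟨z m, antitone_ballClass hconn hnm.le ⟨F.trans (BallIso.ofEqOn hagree)⟩⟩

theorem IsEventuallyPeriodic.eventuallyConst_ballClass [T.LocallyFinite] (hconn : T.Connected)
    (hφ : IsEventuallyPeriodic T φ) (x : V) : EventuallyConst (ballClass T φ φ x) atTop := by
  obtain ⟨K, -, hKfin, -, hK⟩ := hφ
  by_cases hnear : ∃ n₀, ∀ z ∈ ballClass T φ φ x n₀, ∃ κ ∈ K, T.dist κ z ≤ n₀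
  · obtain ⟨n₀, hn₀⟩ := hnear
    refine (antitone_ballClass hconn).eventuallyConst_of_finite (n₀ := n₀) ?_
    refine (hKfin.biUnion fun κ _ => hconn.finite_setOf_dist_le κ n₀).subset fun z hz => ?_
    simpa using hn₀ z hz
  · push Not at hnear
    obtain ⟨ψ, hψ, hne⟩ := exists_periodic_ballClass_nonempty hconn hKfin hK hnear
    exact eventuallyConst_ballClass_of_periodic hconn hψ hne

end EventuallyPeriodic

theorem stmt_9 {V A : Type*} (T : SimpleGraph V) (φ : V → A) (k : ℕ)
    (hk : 2 ≤ k) (htree : T.IsTree) (hreg : ∀ v : V, (T.neighborSet v).ncard = k)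
    (hep : IsEventuallyPeriodic T φ) :
    ∀ x : V, (TypeSet T φ x).Finite := by
  have : T.LocallyFinite := fun v =>
    (Set.finite_of_ncard_pos (by rw [hreg v]; omega : 0 < (T.neighborSet v).ncard)).fintype
  exact fun x => typeSet_finite_of_eventuallyConst (hep.eventuallyConst_ballClass htree.connected x)
end
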